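/- arXiv:1809.08762 — 8 statements merged into one kernel-verified Lean document; each statement's English description precedes it below -/
import Mathlib

section
/- Let G = A ∗_C B be an amalgamated free product of groups A and B over a common subgroup C (given by injective homomorphisms of C into A and into B). If N is a normal subgroup of A such that N ∩ C = {1}, then A ∩ ⟪N⟫ = N, where ⟪N⟫ is the normal closure of N in G; equivalently, the natural homomorphism A/N → G/⟪N⟫ is injective. -/
/-!
Quotienting the factor `A` by `N` and keeping `B` gives a homomorphism
`A ∗_C B → (A/N) ∗_C B` that kills `⟪N⟫`. Since `N ∩ C = 1`, the group `C` still embeds in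
`A/N`, so `A/N` embeds in the new amalgamated product; hence an element of `A` lying in `⟪N⟫`
already maps to `1` in `A/N`, i.e. lies in `N`.
-/

theorem Subgroup.range_inf_normalClosure_map_eq_of_ker_comp {A G H : Type*} [Group A]
    [Group G] [Group H] (ι : A →* G) (f : G →* H) (N : Subgroup A)
    (hN : (f.comp ι).ker = N) :
    ι.range ⊓ normalClosure (N.map ι : Set G) = N.map ι := by
  rw [← MonoidHom.comap_ker] at hN
  have hle : normalClosure (N.map ι : Set G) ≤ f.ker :=
    normalClosure_le_normal (hN ▸ map_comap_le ι f.ker)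
  refine le_antisymm ?_ (le_inf (map_le_range ι N) subset_normalClosure)
  rintro _ ⟨⟨a, rfl⟩, ha⟩
  exact mem_map_of_mem ι (hN ▸ mem_comap.2 (hle ha))

theorem QuotientGroup.injective_mk'_comp {C A : Type*} [Group C] [Group A] {f : C →* A}
    (hf : Function.Injective f) {N : Subgroup A} [N.Normal] (hN : N ⊓ f.range = ⊥) :
    Function.Injective ((mk' N).comp f) := by
  rw [← MonoidHom.ker_eq_bot_iff, eq_bot_iff]
  intro c hc
  have hfc : f c ∈ N ⊓ f.range := ⟨(eq_one_iff _).1 hc, c, rfl⟩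
  rw [hN, Subgroup.mem_bot] at hfc
  exact hf (hfc.trans (map_one f).symm)

namespace Monoid.PushoutI

variable {C : Type*} [Group C] {K : Bool → Type*} [∀ b, Group (K b)]
  (φ : ∀ b, C →* K b) (N : Subgroup (K true)) [N.Normal]

def FilledFactor : Bool → Type _
  | true => K true ⧸ N
  | false => K false

instance : ∀ b, Group (FilledFactor (K := K) N b)
  | true => inferInstanceAs (Group (K true ⧸ N))
  | false => inferInstanceAs (Group (K false))

def filledφ : ∀ b, C →* FilledFactor (K := K) N b
  | true => (QuotientGroup.mk' N).comp (φ true)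
  | false => φ false

def fillFactor : ∀ b, K b →* PushoutI (filledφ φ N)
  | true => (of (φ := filledφ φ N) true).comp (QuotientGroup.mk' N)
  | false => of (φ := filledφ φ N) false

theorem fillFactor_comp (b : Bool) :
    (fillFactor φ N b).comp (φ b) = base (filledφ φ N) := by
  cases b
  · exact of_comp_eq_base false
  · exact (MonoidHom.comp_assoc _ _ _).symm.trans (of_comp_eq_base true)

def fill : PushoutI φ →* PushoutI (filledφ φ N) :=
  lift (fillFactor φ N) (base (filledφ φ N)) (fillFactor_comp φ N)

theorem fill_comp_of_true :
    (fill φ N).comp (of true) = (of (φ := filledφ φ N) true).comp (QuotientGroup.mk' N) :=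
  MonoidHom.ext (lift_of (fillFactor φ N) _ (fillFactor_comp φ N))

theorem ker_fill_comp_of_true (hφ : ∀ b, Function.Injective (φ b))
    (hNC : N ⊓ (φ true).range = ⊥) : ((fill φ N).comp (of true)).ker = N := by
  have hfilled : ∀ b, Function.Injective (filledφ φ N b)
    | true => QuotientGroup.injective_mk'_comp (hφ true) hNC
    | false => hφ false
  rw [fill_comp_of_true]
  exact (MonoidHom.ker_comp_of_injective _ _ (of_injective hfilled true)).trans
    (QuotientGroup.ker_mk' N)

end Monoid.PushoutI

/-- **Dehn filling of an amalgamated free product is injective on the filled factor.**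
Let `G = A ∗_C B` be an amalgamated free product of groups `A = K true` and `B = K false`
over a common group `C`, given by injective homomorphisms `φ b : C →* K b`. If `N` is a
normal subgroup of `A` meeting the image of `C` trivially, then `A ∩ ⟪N⟫ = N` in `G`
(with `A` and `N` regarded as subgroups of `G` via the canonical embedding); equivalently
the natural homomorphism `A/N → G/⟪N⟫` is injective. -/
theorem amalgamated_inf_normalClosure {C : Type*} [Group C] {K : Bool → Type*}
    [∀ b, Group (K b)] (φ : ∀ b, C →* K b) (hφ : ∀ b, Function.Injective (φ b))
    (N : Subgroup (K true)) [N.Normal] (hNC : N ⊓ (φ true).range = ⊥) :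
    (Monoid.PushoutI.of (φ := φ) true).range ⊓
        Subgroup.normalClosure
          ((N.map (Monoid.PushoutI.of (φ := φ) true) : Subgroup (Monoid.PushoutI φ)) :
            Set (Monoid.PushoutI φ))
      = N.map (Monoid.PushoutI.of (φ := φ) true) :=
  Subgroup.range_inf_normalClosure_map_eq_of_ker_comp _ _ N
    (Monoid.PushoutI.ker_fill_comp_of_true φ N hφ hNC)
end

section
/- Let G = A ∗_C B be an amalgamated free product of groups A and B over a common subgroup C (given by injective homomorphisms of C into A and into B). Suppose N is a normal subgroup of A with N ∩ C = {1}. Let Q = G/⟪N⟫ and R = A/N, where R is identified with a subgroup of Q via the (injective) natural homomorphism. Then there is an isomorphism of ℤQ-modules Rel(G, ⟪N⟫) ≅ ℤQ ⊗_{ℤR} Rel(A, N). -/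
/-!
Write `Q = G ⧸ ⟪N⟫` and `M = ℤQ ⊗_{ℤR} Rel(A, N)`. The map `q ⊗ n ↦ s(q) n s(q)⁻¹`, for a section
`s` of `G → Q`, descends to `M → Rel(G, ⟪N⟫)`. Its inverse comes from a 1-cocycle `Γ` of `G`
with values in the coinduced module of functions `Q → M` satisfying `Γ n = 1 ⊗ n` for `n ∈ N`:
on `⟪N⟫` such a cocycle is constant in `q` and additive, and `x ↦ Γ x 1` inverts the map above.

On `A` the cocycle is written down using coset representatives of the image of `A` in `Q`; this
needs `A ∩ ⟪N⟫ = N`, which follows from `N ∩ C = 1` by mapping onto `(A ⧸ N) ∗_C B`. Since `C`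
acts freely on `Q`, the restriction to `C` is a coboundary, so it extends to `B` by the same
coboundary, and the two cocycles glue over the amalgamated product.
-/

open scoped TensorProduct

/-- The `ℤQ`-submodule of relations defining the induced module
`ℤQ ⊗_{ℤR} Rel(A, N)` (where `R = A/N` maps to `Q` via the homomorphism induced by `f`)
as a quotient of `ℤQ ⊗_ℤ Rel(A, N)`; here `Rel(A, N)` is the abelianization of `N`,
on which `h ∈ A` acts by conjugation. -/
noncomputable def relSub (Q : Type*) [Group Q] (A : Type*) [Group A]
    (N : Subgroup A) [N.Normal] (f : A →* Q) :
    Submodule (MonoidAlgebra ℤ Q)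
      (MonoidAlgebra ℤ Q ⊗[ℤ] Additive (Abelianization ↥N)) :=
  Submodule.span (MonoidAlgebra ℤ Q)
    {x | ∃ (a : MonoidAlgebra ℤ Q) (h : A) (m : Additive (Abelianization ↥N)),
      x = (a * MonoidAlgebra.of ℤ Q (f h)) ⊗ₜ[ℤ] m -
        a ⊗ₜ[ℤ] Additive.ofMul ((Abelianization.map (MulAut.conjNormal h).toMonoidHom)
          (Additive.toMul m))}

/-- `Rel(G, K)` (the abelianization of `K`, with the `Q = G/K` action induced by
conjugation) is isomorphic, as a `ℤQ`-module, to the induced module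
`ℤQ ⊗_{ℤR} Rel(A, N)`: there is an additive isomorphism which intertwines the
conjugation action of `G` (inducing the `Q`-action on the left) with multiplication by
group elements of `Q` in the group ring (the `Q`-action on the right). -/
noncomputable def RelModuleIsoInd (G : Type*) [Group G] {A : Type*} [Group A]
    (f : A →* G) (N : Subgroup A) [N.Normal] (K : Subgroup G) [K.Normal] : Prop :=
  ∃ e : Additive (Abelianization ↥K) ≃+
      ((MonoidAlgebra ℤ (G ⧸ K) ⊗[ℤ] Additive (Abelianization ↥N)) ⧸
        relSub (G ⧸ K) A N ((QuotientGroup.mk' K).comp f)),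
    ∀ (g : G) (x : Additive (Abelianization ↥K)),
      e (Additive.ofMul ((Abelianization.map (MulAut.conjNormal g).toMonoidHom)
          (Additive.toMul x))) =
        MonoidAlgebra.of ℤ (G ⧸ K) (QuotientGroup.mk g) • e x

open Function MonoidAlgebra

theorem MonoidHom.exists_rightTransversal {W X : Type*} [Group W] [Group X] (e : W →* X) :
    ∃ (w : X → W) (t : X → X), (∀ x, e (w x) * t x = x) ∧ ∀ v x, t (e v * x) = t x := by
  let t : X → X := fun x => (Quotient.mk (QuotientGroup.rightRel e.range) x).out
  have ht : ∀ x, x * (t x)⁻¹ ∈ e.range := fun x =>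
    QuotientGroup.rightRel_apply.1 (Quotient.mk_out (s := QuotientGroup.rightRel e.range) x)
  choose w hw using ht
  refine ⟨w, t, fun x => by rw [hw, inv_mul_cancel_right], fun v x => ?_⟩
  refine congrArg Quotient.out (Quotient.sound (QuotientGroup.rightRel_apply.2 ⟨v⁻¹, ?_⟩))
  simp

theorem MonoidHom.rightTransversal_factor_mul {W X : Type*} [Group W] [Group X] {e : W →* X}
    (he : Injective e) {w : X → W} {t : X → X} (hwt : ∀ x, e (w x) * t x = x)
    (ht : ∀ v x, t (e v * x) = t x) (v : W) (x : X) : w (e v * x) = v * w x :=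
  he <| mul_right_cancel (b := t x) <| by rw [map_mul, mul_assoc, hwt, ← ht v, hwt]

noncomputable section AffineCocycle

variable (k : Type*) [Semiring k] {H Q M : Type*} [Group H] [Group Q] [AddCommGroup M]
  [Module (MonoidAlgebra k Q) M]

/-- A 1-cocycle of `H` with values in the module of functions `Q → M`, normalized so that
`(m, q) ↦ (π h • m + γ h q, π h * q)` is an action of `H` on `M × Q` (`affineAction`). -/
def IsAffineCocycle (π : H →* Q) (γ : H → Q → M) : Prop :=
  ∀ g h q, γ (g * h) q = of k Q (π g) • γ h q + γ g (π h * q)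

def affineCoboundary (π : H →* Q) (D : Q → M) : H → Q → M :=
  fun h q => D (π h * q) - of k Q (π h) • D q

variable {k}

theorem isAffineCocycle_affineCoboundary (π : H →* Q) (D : Q → M) :
    IsAffineCocycle k π (affineCoboundary k π D) := by
  intro g h q
  simp only [affineCoboundary, map_mul, mul_assoc, smul_sub, mul_smul]
  abel

namespace IsAffineCocycle

variable {π : H →* Q} {γ : H → Q → M}

theorem comp (hγ : IsAffineCocycle k π γ) {H' : Type*} [Group H'] (f : H' →* H) :
    IsAffineCocycle k (π.comp f) (fun h => γ (f h)) := by
  intro g h q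
  simp only [map_mul, hγ _ _ q, MonoidHom.comp_apply]

theorem apply_one (hγ : IsAffineCocycle k π γ) (q : Q) : γ 1 q = 0 := by
  simpa [map_one, one_smul] using hγ 1 1 q

theorem apply_mul_of_map_eq_one (hγ : IsAffineCocycle k π γ) {g : H} (hg : π g = 1) (h : H)
    (q : Q) : γ (g * h) q = γ h q + γ g (π h * q) := by
  rw [hγ, hg, map_one, one_smul]

theorem apply_conj (hγ : IsAffineCocycle k π γ) (c : H) {g : H} (hg : π g = 1) (q : Q) :
    γ (c * g * c⁻¹) q = of k Q (π c) • γ g (π c⁻¹ * q) := by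
  have hc : of k Q (π c) • γ c⁻¹ q + γ c (π c⁻¹ * q) = 0 := by
    rw [← hγ, mul_inv_cancel, hγ.apply_one]
  rw [hγ, hγ c g, map_mul, hg, mul_one, one_mul, add_left_comm, hc, add_zero]

/-- Shapiro's lemma in degree one: `H` acts freely on `Q`, so the functions `Q → M` form a
coinduced module. -/
theorem exists_eq_affineCoboundary {e : H →* Q} {γ : H → Q → M} (hγ : IsAffineCocycle k e γ)
    (he : Injective e) : ∃ D : Q → M, γ = affineCoboundary k e D := by
  obtain ⟨w, t, hwt, ht⟩ := e.exists_rightTransversal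
  refine ⟨fun q => γ (w q) (t q), funext fun h => funext fun q => ?_⟩
  simp only [affineCoboundary, MonoidHom.rightTransversal_factor_mul he hwt ht, ht]
  rw [hγ, hwt, add_sub_cancel_left]

def affineAction (hγ : IsAffineCocycle k π γ) : H →* Function.End (M × Q) where
  toFun h p := (of k Q (π h) • p.1 + γ h p.2, π h * p.2)
  map_one' := by
    funext p
    simp only [map_one, one_smul, hγ.apply_one, add_zero, one_mul, Function.End.one_def, id]
  map_mul' g h := by
    funext p
    simp only [map_mul, hγ g h, mul_smul, mul_assoc]
    congr 1
    rw [smul_add]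
    abel

theorem affineAction_apply (hγ : IsAffineCocycle k π γ) (h : H) (p : M × Q) :
    hγ.affineAction h p = (of k Q (π h) • p.1 + γ h p.2, π h * p.2) := rfl

theorem apply_inv_of_map_eq_one (hγ : IsAffineCocycle k π γ) {g : H} (hg : π g = 1) (q : Q) :
    γ g⁻¹ q = -γ g q := by
  have h := hγ.apply_mul_of_map_eq_one hg g⁻¹ q
  rw [mul_inv_cancel, hγ.apply_one, map_inv, hg, inv_one, one_mul] at h
  exact eq_neg_of_add_eq_zero_left h.symm

def constSubgroup (hγ : IsAffineCocycle k π γ) : Subgroup H where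
  carrier := {g | π g = 1 ∧ ∀ q q', γ g q = γ g q'}
  one_mem' := ⟨map_one π, fun q q' => by rw [hγ.apply_one, hγ.apply_one]⟩
  mul_mem' := by
    rintro g h ⟨hg, hgc⟩ ⟨hh, hhc⟩
    refine ⟨by rw [map_mul, hg, hh, one_mul], fun q q' => ?_⟩
    rw [hγ.apply_mul_of_map_eq_one hg, hγ.apply_mul_of_map_eq_one hg, hhc q q', hgc _ (π h * q')]
  inv_mem' := by
    rintro g ⟨hg, hgc⟩
    refine ⟨by rw [map_inv, hg, inv_one], fun q q' => ?_⟩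
    rw [hγ.apply_inv_of_map_eq_one hg, hγ.apply_inv_of_map_eq_one hg, hgc q q']

theorem constSubgroup_normal (hγ : IsAffineCocycle k π γ) : hγ.constSubgroup.Normal where
  conj_mem g := by
    rintro ⟨hg, hgc⟩ c
    refine ⟨by rw [map_mul, map_mul, hg, mul_one, ← map_mul, mul_inv_cancel, map_one],
      fun q q' => ?_⟩
    rw [hγ.apply_conj c hg, hγ.apply_conj c hg, hgc _ (π c⁻¹ * q')]

theorem normalClosure_le_constSubgroup (hγ : IsAffineCocycle k π γ) {A : Type*} [Group A]
    (f : A →* H) (N : Subgroup A) (hN : ∀ n ∈ N, π (f n) = 1 ∧ ∀ q q', γ (f n) q = γ (f n) q') :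
    Subgroup.normalClosure (N.map f : Set H) ≤ hγ.constSubgroup :=
  have := hγ.constSubgroup_normal
  Subgroup.normalClosure_le_normal fun _ ⟨n, hn, hfn⟩ => hfn ▸ hN n hn

end IsAffineCocycle

/-- The affine actions of the factors on `M × Q` agree on `C`, and the action of the amalgamated
product they generate is again affine. -/
theorem Monoid.PushoutI.exists_isAffineCocycle {ι C : Type*} {G : ι → Type*} [∀ i, Group (G i)]
    [Group C] {φ : ∀ i, C →* G i} (π : Monoid.PushoutI φ →* Q) (γ : ∀ i, G i → Q → M)
    (hγ : ∀ i, IsAffineCocycle k (π.comp (of i)) (γ i)) (γ₀ : C → Q → M)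
    (hγ₀ : IsAffineCocycle k (π.comp (base φ)) γ₀) (hcompat : ∀ i c, γ i (φ i c) = γ₀ c) :
    ∃ Γ : Monoid.PushoutI φ → Q → M, IsAffineCocycle k π Γ ∧ ∀ i g, Γ (of i g) = γ i g := by
  let T := lift (φ := φ) (fun i => (hγ i).affineAction) hγ₀.affineAction fun i => by
    refine MonoidHom.ext fun c => funext fun p => ?_
    simp [IsAffineCocycle.affineAction_apply, hcompat, of_apply_eq_base]
  obtain ⟨Γ, hΓ⟩ : ∃ Γ : Monoid.PushoutI φ → Q → M, ∀ g q, Γ g q = (T g (0, q)).1 :=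
    ⟨_, fun _ _ => rfl⟩
  have hTmul : ∀ x y p, T (x * y) p = T x (T y p) := fun x y p => by rw [map_mul]; rfl
  have hT : ∀ g p, T g p = (MonoidAlgebra.of k Q (π g) • p.1 + Γ g p.2, π g * p.2) := by
    intro g
    induction g using Monoid.PushoutI.induction_on with
    | of i g => intro p; simp [T, hΓ, IsAffineCocycle.affineAction_apply]
    | base c => intro p; simp [T, hΓ, IsAffineCocycle.affineAction_apply]
    | mul x y hx hy =>
      intro p
      rw [hΓ, hTmul, hTmul, hy, hy, hx, hx]
      simp only [map_mul, mul_smul, smul_add, smul_zero, zero_add, mul_assoc]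
      congr 1
      abel
  refine ⟨Γ, fun g h q => ?_, fun i g => funext fun q => ?_⟩
  · rw [hΓ, hTmul, hT h, hT g, smul_zero, zero_add]
  · simp [hΓ, T, IsAffineCocycle.affineAction_apply]

end AffineCocycle

theorem Abelianization.ofMul_of_surjective (G : Type*) [Group G] :
    Surjective fun g : G => Additive.ofMul (Abelianization.of g) :=
  QuotientGroup.mk_surjective

noncomputable section RelConj

variable {G : Type*} [Group G] (K : Subgroup G) [K.Normal]

/-- The action of `g` on `Rel(G, K)`, in the form in which it appears in `relSub` and
`RelModuleIsoInd`. -/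
def relConj (g : G) : Additive (Abelianization K) →+ Additive (Abelianization K) :=
  MonoidHom.toAdditive (Abelianization.map (MulAut.conjNormal g).toMonoidHom)

theorem relConj_ofMul_of (g : G) (k : K) :
    relConj K g (.ofMul (.of k)) = .ofMul (.of ⟨g * k * g⁻¹, ‹K.Normal›.conj_mem k k.2 g⟩) := by
  simp [relConj, Abelianization.map_of]
  rfl

/-- Conjugation by an element of `K` is trivial on `Rel(G, K)`, so the `G`-action factors
through `G ⧸ K`. -/
theorem relConj_eq_of_mk_eq {g g' : G} (h : (g : G ⧸ K) = g') : relConj K g = relConj K g' := by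
  obtain ⟨u, rfl⟩ : ∃ u : K, g' = g * u := ⟨⟨g⁻¹ * g', QuotientGroup.eq.1 h⟩, by simp⟩
  ext k
  have hconj : (⟨g * u * k * (g * u)⁻¹, ‹K.Normal›.conj_mem k k.2 _⟩ : K) =
      ⟨g * ↑(u * k * u⁻¹) * g⁻¹, ‹K.Normal›.conj_mem _ (u * k * u⁻¹).2 g⟩ := by
    ext
    simp [mul_assoc]
  have hab : Abelianization.of (u * k * u⁻¹) = Abelianization.of k := by
    rw [map_mul, map_mul, mul_comm, ← mul_assoc, ← map_mul, inv_mul_cancel, map_one, one_mul]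
  change relConj K g (.ofMul (.of k)) = relConj K (g * u) (.ofMul (.of k))
  rw [relConj_ofMul_of K (g * u), hconj, ← relConj_ofMul_of K g (u * k * u⁻¹), hab]

end RelConj

theorem Abelianization.addMonoidHom_ext_normalClosure {G V : Type*} [Group G] [AddGroup V]
    {S : Set G} {F F' : Additive (Abelianization (Subgroup.normalClosure S)) →+ V}
    (h : ∀ s (hs : s ∈ S) (c : G), F (.ofMul (.of ⟨c * s * c⁻¹,
      Subgroup.normalClosure_normal.conj_mem s (Subgroup.subset_normalClosure hs) c⟩)) =
      F' (.ofMul (.of ⟨c * s * c⁻¹,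
        Subgroup.normalClosure_normal.conj_mem s (Subgroup.subset_normalClosure hs) c⟩))) :
    F = F' := by
  refine AddMonoidHom.ext fun x => ?_
  obtain ⟨⟨x, hx⟩, rfl⟩ := Abelianization.ofMul_of_surjective _ x
  induction hx using Subgroup.closure_induction with
  | mem x hx =>
    obtain ⟨s, hs, hc⟩ := Group.mem_conjugatesOfSet_iff.1 hx
    obtain ⟨c, rfl⟩ := isConj_iff.1 hc
    exact h s hs c
  | one =>
    change F (.ofMul (.of 1)) = F' (.ofMul (.of 1))
    simp only [map_one, ofMul_one, map_zero]
  | mul x y hx hy ihx ihy =>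
    change F (.ofMul (.of (⟨x, hx⟩ * ⟨y, hy⟩))) = F' (.ofMul (.of (⟨x, hx⟩ * ⟨y, hy⟩)))
    rw [map_mul, ofMul_mul, map_add, map_add, ihx, ihy]
  | inv x hx ih =>
    change F (.ofMul (.of ⟨x, hx⟩⁻¹)) = F' (.ofMul (.of ⟨x, hx⟩⁻¹))
    rw [map_inv, ofMul_inv, map_neg, map_neg, ih]

noncomputable section InducedModule

namespace IndRel

variable {Q A V : Type*} [Group A] {N : Subgroup A} [AddCommGroup V]

def liftTensor (Φ : Q → Additive (Abelianization N) →+ V) :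
    MonoidAlgebra ℤ Q ⊗[ℤ] Additive (Abelianization N) →+ V :=
  (TensorProduct.lift <| Finsupp.lsum ℤ
    (fun q => LinearMap.toSpanSingleton ℤ _ (Φ q).toIntLinearMap) ∘ₗ
      (coeffLinearEquiv ℤ).toLinearMap).toAddMonoidHom

theorem liftTensor_single_tmul (Φ : Q → Additive (Abelianization N) →+ V) (q : Q) (c : ℤ)
    (m : Additive (Abelianization N)) : liftTensor Φ (single q c ⊗ₜ m) = c • Φ q m := by
  simp [liftTensor]

end IndRel

variable {Q A : Type*} [Group Q] [Group A] (f : A →* Q) (N : Subgroup A) [N.Normal]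

/-- The induced module `ℤQ ⊗_{ℤR} Rel(A, N)`, presented as in `relSub`. -/
abbrev IndRel := (MonoidAlgebra ℤ Q ⊗[ℤ] Additive (Abelianization N)) ⧸ relSub Q A N f

variable {f N}

namespace IndRel

def tmul (q : Q) : Additive (Abelianization N) →+ IndRel f N :=
  (relSub Q A N f).mkQ.toAddMonoidHom.comp (TensorProduct.mk ℤ _ _ (of ℤ Q q)).toAddMonoidHom

theorem tmul_apply (q : Q) (m : Additive (Abelianization N)) :
    tmul q m = Submodule.Quotient.mk (p := relSub Q A N f) (of ℤ Q q ⊗ₜ m) := rfl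

theorem of_smul_tmul (q q' : Q) (m : Additive (Abelianization N)) :
    of ℤ Q q' • tmul (f := f) q m = tmul (q' * q) m := by
  rw [tmul_apply, ← Submodule.Quotient.mk_smul, TensorProduct.smul_tmul', smul_eq_mul, ← map_mul]
  rfl

theorem tmul_mul_apply (q : Q) (h : A) (m : Additive (Abelianization N)) :
    tmul (q * f h) m = tmul (f := f) q (relConj N h m) := by
  rw [tmul_apply, tmul_apply, ← sub_eq_zero, ← Submodule.Quotient.mk_sub,
    Submodule.Quotient.mk_eq_zero, map_mul]
  exact Submodule.subset_span ⟨of ℤ Q q, h, m, rfl⟩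

variable {V : Type*} [AddCommGroup V]

theorem hom_ext {F F' : IndRel f N →+ V}
    (h : ∀ q (n : N), F (tmul q (.ofMul (.of n))) = F' (tmul q (.ofMul (.of n)))) : F = F' := by
  ext x
  obtain ⟨z, rfl⟩ := Submodule.Quotient.mk_surjective _ x
  induction z using TensorProduct.induction_on with
  | zero => rw [Submodule.Quotient.mk_zero, map_zero, map_zero]
  | add x y hx hy => rw [Submodule.Quotient.mk_add, map_add, map_add, hx, hy]
  | tmul a m =>
    obtain ⟨n, rfl⟩ := Abelianization.ofMul_of_surjective N m
    induction a using MonoidAlgebra.induction_linear with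
    | zero => simp only [TensorProduct.zero_tmul, Submodule.Quotient.mk_zero, map_zero]
    | add a b ha hb =>
      simp only [TensorProduct.add_tmul, Submodule.Quotient.mk_add, map_add, ha, hb]
    | single q c =>
      have hsingle : single q c ⊗ₜ[ℤ] Additive.ofMul (Abelianization.of n) =
          c • (of ℤ Q q ⊗ₜ[ℤ] Additive.ofMul (Abelianization.of n)) := by
        rw [TensorProduct.smul_tmul']
        simp
      rw [hsingle, Submodule.Quotient.mk_smul, map_zsmul, map_zsmul]
      exact congrArg (c • ·) (h q n)

theorem map_eq_zero_of_mem_relSub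
    {F : MonoidAlgebra ℤ Q ⊗[ℤ] Additive (Abelianization N) →+ V}
    (hF : ∀ a h m, F ((a * of ℤ Q (f h)) ⊗ₜ m) = F (a ⊗ₜ relConj N h m))
    {x : MonoidAlgebra ℤ Q ⊗[ℤ] Additive (Abelianization N)} (hx : x ∈ relSub Q A N f) :
    F x = 0 := by
  -- the generators of `relSub` are stable under left multiplication, so only `ℤ`-combinations
  -- of them have to be checked
  suffices ∀ r : MonoidAlgebra ℤ Q, F (r • x) = 0 by simpa using this 1
  induction hx using Submodule.span_induction with
  | mem y hy =>
    obtain ⟨a, h, m, rfl⟩ := hy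
    intro r
    rw [smul_sub, TensorProduct.smul_tmul', TensorProduct.smul_tmul', smul_eq_mul, smul_eq_mul,
      ← mul_assoc, map_sub, hF]
    exact sub_self _
  | zero => simp
  | add y z _ _ hy hz => intro r; rw [smul_add, map_add, hy, hz, add_zero]
  | smul s y _ hy => intro r; rw [smul_smul]; exact hy _

theorem liftTensor_mul_of_tmul {Φ : Q → Additive (Abelianization N) →+ V}
    (hΦ : ∀ q h m, Φ (q * f h) m = Φ q (relConj N h m)) (a : MonoidAlgebra ℤ Q) (h : A)
    (m : Additive (Abelianization N)) :
    liftTensor Φ ((a * of ℤ Q (f h)) ⊗ₜ m) = liftTensor Φ (a ⊗ₜ relConj N h m) := by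
  induction a using MonoidAlgebra.induction_linear with
  | zero => simp only [zero_mul, TensorProduct.zero_tmul]
  | add a b ha hb => simp only [add_mul, TensorProduct.add_tmul, map_add, ha, hb]
  | single q c =>
    rw [of_apply, single_mul_single, mul_one, liftTensor_single_tmul, liftTensor_single_tmul, hΦ]

def lift (Φ : Q → Additive (Abelianization N) →+ V)
    (hΦ : ∀ q h m, Φ (q * f h) m = Φ q (relConj N h m)) : IndRel f N →+ V :=
  ((Submodule.liftQ ((relSub Q A N f).restrictScalars ℤ) (liftTensor Φ).toIntLinearMap fun _ hx =>
    map_eq_zero_of_mem_relSub (liftTensor_mul_of_tmul hΦ) hx).comp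
    (Submodule.Quotient.restrictScalarsEquiv ℤ (relSub Q A N f)).symm.toLinearMap).toAddMonoidHom

theorem lift_tmul (Φ : Q → Additive (Abelianization N) →+ V)
    (hΦ : ∀ q h m, Φ (q * f h) m = Φ q (relConj N h m)) (q : Q) (m : Additive (Abelianization N)) :
    lift Φ hΦ (tmul q m) = Φ q m := by
  change liftTensor Φ (single q 1 ⊗ₜ m) = _
  rw [liftTensor_single_tmul, one_smul]


theorem tmul_ofMul_of_congr {q q' : Q} {n n' : N} (hq : q = q') (hn : (n : A) = n') :
    tmul (f := f) q (.ofMul (.of n)) = tmul q' (.ofMul (.of n')) := by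
  rw [hq, Subtype.ext hn]

/-- Writing `q = f (w q) * t q` with `t q` a representative of `f(A) * q`, the cocycle records
the element of `N` by which `a * w q` differs from `w (f a * q)`. -/
theorem exists_isAffineCocycle (hf : f.ker = N) :
    ∃ γ : A → Q → IndRel f N, IsAffineCocycle ℤ f γ ∧
      ∀ (n : N) q, γ n q = tmul 1 (.ofMul (.of n)) := by
  obtain ⟨w, t, hwt, ht⟩ := f.exists_rightTransversal
  have hw : ∀ a q, f (w (f a * q)) = f (a * w q) := fun a q => by
    have h := hwt (f a * q)
    rw [ht] at h
    exact mul_right_cancel (b := t q) (by rw [h, map_mul, mul_assoc, hwt])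
  have mem : ∀ a q, (w (f a * q))⁻¹ * a * w q ∈ N := fun a q => by
    rw [← hf, MonoidHom.mem_ker, map_mul, map_mul, map_inv, hw, map_mul]
    group
  refine ⟨fun a q => tmul (f (w (f a * q))) (.ofMul (.of ⟨_, mem a q⟩)), fun a a' q => ?_,
    fun n q => ?_⟩
  · dsimp only
    rw [of_smul_tmul, ← map_mul, ← hw, add_comm, ← map_add, ← ofMul_mul, ← map_mul]
    refine tmul_ofMul_of_congr (by rw [map_mul, mul_assoc]) ?_
    simp only [Subgroup.coe_mul, map_mul, mul_assoc, mul_inv_cancel_left]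
  · have hn : f n = 1 := by rw [← MonoidHom.mem_ker, hf]; exact n.2
    dsimp only
    rw [← one_mul (f (w _)), tmul_mul_apply, relConj_ofMul_of]
    refine tmul_ofMul_of_congr rfl ?_
    simp [hn, mul_assoc]

end IndRel

end InducedModule

noncomputable section RelIso

variable {G : Type*} [Group G] {K : Subgroup G} [K.Normal]

namespace IsAffineCocycle

variable {k M : Type*} [Semiring k] [AddCommGroup M] [Module (MonoidAlgebra k (G ⧸ K)) M]
  {γ : G → G ⧸ K → M}

def relHom (hγ : IsAffineCocycle k (QuotientGroup.mk' K) γ) :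
    Additive (Abelianization K) →+ M :=
  MonoidHom.toAdditiveLeft <| Abelianization.lift
    { toFun := fun x => .ofAdd (γ x 1)
      map_one' := by simp [hγ.apply_one]
      map_mul' := fun x y => by
        have hx : QuotientGroup.mk' K x = 1 := (QuotientGroup.eq_one_iff _).2 x.2
        have hy : QuotientGroup.mk' K y = 1 := (QuotientGroup.eq_one_iff _).2 y.2
        rw [Subgroup.coe_mul, hγ.apply_mul_of_map_eq_one hx, hy, one_mul, add_comm]
        rfl }

theorem relHom_ofMul_of (hγ : IsAffineCocycle k (QuotientGroup.mk' K) γ) (x : K) :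
    hγ.relHom (.ofMul (.of x)) = γ x 1 := rfl

theorem relHom_relConj (hγ : IsAffineCocycle k (QuotientGroup.mk' K) γ)
    (hK : K ≤ hγ.constSubgroup) (g : G) (x : Additive (Abelianization K)) :
    hγ.relHom (relConj K g x) = of k (G ⧸ K) g • hγ.relHom x := by
  obtain ⟨x, rfl⟩ := Abelianization.ofMul_of_surjective K x
  have hx := hK x.2
  rw [relConj_ofMul_of, relHom_ofMul_of, relHom_ofMul_of, hγ.apply_conj g hx.1, hx.2 _ 1]
  rfl

end IsAffineCocycle

namespace IndRel

variable {A : Type*} [Group A] {f : A →* G} {N : Subgroup A} [N.Normal]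

def toRel (hNK : N.map f ≤ K) :
    IndRel ((QuotientGroup.mk' K).comp f) N →+ Additive (Abelianization K) :=
  lift (fun q => (relConj K q.out).comp (MonoidHom.toAdditive
      (Abelianization.map ((f.comp N.subtype).codRestrict K fun n => hNK ⟨n, n.2, rfl⟩))))
    fun q h m => by
      obtain ⟨n, rfl⟩ := Abelianization.ofMul_of_surjective N m
      have hout : relConj K (q * (QuotientGroup.mk' K).comp f h).out = relConj K (q.out * f h) :=
        relConj_eq_of_mk_eq K (by simp)
      rw [AddMonoidHom.comp_apply, AddMonoidHom.comp_apply, hout]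
      simp only [relConj_ofMul_of, MonoidHom.coe_toAdditive, Function.comp_apply, toMul_ofMul,
        Abelianization.map_of]
      congr 2
      ext
      simp [mul_assoc]

theorem toRel_tmul (hNK : N.map f ≤ K) (q : G ⧸ K) (n : N) :
    toRel hNK (tmul q (.ofMul (.of n))) = .ofMul (.of ⟨q.out * f n * q.out⁻¹,
      ‹K.Normal›.conj_mem _ (hNK ⟨n, n.2, rfl⟩) q.out⟩) :=
  (lift_tmul _ _ _ _).trans (relConj_ofMul_of K _ _)

end IndRel

theorem relModuleIsoInd_of_isAffineCocycle {A : Type*} [Group A] (f : A →* G)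
    (N : Subgroup A) [N.Normal] (hK : K = Subgroup.normalClosure (N.map f : Set G))
    {Γ : G → G ⧸ K → IndRel ((QuotientGroup.mk' K).comp f) N}
    (hΓ : IsAffineCocycle ℤ (QuotientGroup.mk' K) Γ)
    (hΓN : ∀ (n : N) q, Γ (f n) q = IndRel.tmul 1 (.ofMul (.of n))) :
    RelModuleIsoInd G f N K := by
  have hNK : N.map f ≤ K := hK ▸ Subgroup.subset_normalClosure
  have hfN : ∀ n : N, QuotientGroup.mk' K (f n) = 1 := fun n =>
    (QuotientGroup.eq_one_iff _).2 (hNK ⟨n, n.2, rfl⟩)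
  have hconst : K ≤ hΓ.constSubgroup := hK ▸ hΓ.normalClosure_le_constSubgroup f N fun n hn =>
    ⟨hfN ⟨n, hn⟩, fun q q' => by rw [hΓN ⟨n, hn⟩, hΓN ⟨n, hn⟩]⟩
  have hΓconj : ∀ (c : G) (n : N),
      Γ (c * f n * c⁻¹) 1 = IndRel.tmul (c : G ⧸ K) (.ofMul (.of n)) := fun c n => by
    rw [hΓ.apply_conj c (hfN n), hΓN, IndRel.of_smul_tmul, mul_one]
    rfl
  have hleft : (IndRel.toRel hNK).comp hΓ.relHom = .id _ := by
    subst hK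
    refine Abelianization.addMonoidHom_ext_normalClosure fun s ⟨n, hn, hs⟩ c => ?_
    subst hs
    simp only [AddMonoidHom.comp_apply, IsAffineCocycle.relHom_ofMul_of, AddMonoidHom.id_apply]
    rw [hΓconj c ⟨n, hn⟩, IndRel.toRel_tmul]
    have h := DFunLike.congr_fun (relConj_eq_of_mk_eq _ (QuotientGroup.out_eq' (c : G ⧸ _)))
      (.ofMul (.of ⟨f n, hNK ⟨n, hn, rfl⟩⟩))
    rwa [relConj_ofMul_of, relConj_ofMul_of] at h
  have hright : hΓ.relHom.comp (IndRel.toRel hNK) = .id _ := by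
    refine IndRel.hom_ext fun q n => ?_
    rw [AddMonoidHom.comp_apply, IndRel.toRel_tmul, IsAffineCocycle.relHom_ofMul_of, hΓconj,
      QuotientGroup.out_eq', AddMonoidHom.id_apply]
  exact ⟨AddMonoidHom.toAddEquiv _ _ hleft hright, hΓ.relHom_relConj hconst⟩

end RelIso

/-- Map onto the amalgamated product of the quotients `G i ⧸ N i`, into which the factors still
embed. -/
theorem Monoid.PushoutI.mem_of_of_mem_normalClosure {ι C : Type*} {G : ι → Type*}
    [∀ i, Group (G i)] [Group C] {φ : ∀ i, C →* G i} (N : ∀ i, Subgroup (G i))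
    [∀ i, (N i).Normal] (hN : ∀ i, Injective ((QuotientGroup.mk' (N i)).comp (φ i)))
    {i : ι} {g : G i}
    (hg : of i g ∈ Subgroup.normalClosure (⋃ j, of (φ := φ) j '' (N j : Set (G j)))) :
    g ∈ N i := by
  let π : PushoutI φ →* PushoutI fun j => (QuotientGroup.mk' (N j)).comp (φ j) :=
    lift (fun j => (of j).comp (QuotientGroup.mk' (N j))) (base _) fun j =>
      MonoidHom.ext fun c => of_apply_eq_base _ j c
  have hker : Subgroup.normalClosure (⋃ j, of j '' (N j : Set (G j))) ≤ π.ker := by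
    refine Subgroup.normalClosure_le_normal ?_
    rintro _ ⟨_, ⟨j, rfl⟩, n, hn, rfl⟩
    simp [π, (QuotientGroup.eq_one_iff n).2 hn]
  have hπ : of (φ := fun j => (QuotientGroup.mk' (N j)).comp (φ j)) i (g : G i ⧸ N i) = 1 := by
    simpa [π] using hker hg
  rw [← QuotientGroup.eq_one_iff]
  exact of_injective hN i (hπ.trans (map_one _).symm)

theorem MonoidHom.injective_comp_of_ker_inf_range_eq_bot {C A Q : Type*} [Group C] [Group A]
    [Group Q] {f : A →* Q} {ψ : C →* A} (hψ : Injective ψ) (h : f.ker ⊓ ψ.range = ⊥) :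
    Injective (f.comp ψ) := by
  refine (injective_iff_map_eq_one _).2 fun c hc => hψ ?_
  have hmem : ψ c ∈ f.ker ⊓ ψ.range := ⟨hc, c, rfl⟩
  rw [h, Subgroup.mem_bot] at hmem
  rw [hmem, map_one]

theorem Monoid.PushoutI.comap_of_normalClosure_map {C : Type*} [Group C] {K : Bool → Type*}
    [∀ b, Group (K b)] {φ : ∀ b, C →* K b} (hφ : ∀ b, Injective (φ b))
    {N : Subgroup (K true)} [N.Normal] (hNC : N ⊓ (φ true).range = ⊥) :
    (Subgroup.normalClosure ((N.map (of true) : Subgroup (PushoutI φ)) : Set (PushoutI φ))).comap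
      (of true) = N := by
  obtain ⟨N', hN'false, hN'true⟩ : ∃ N' : ∀ b, Subgroup (K b), N' false = ⊥ ∧ N' true = N :=
    ⟨fun b => Bool.rec ⊥ N b, rfl, rfl⟩
  have : ∀ b, (N' b).Normal := fun b => by
    cases b
    · rw [hN'false]; infer_instance
    · rw [hN'true]; infer_instance
  refine le_antisymm (fun g hg => ?_) fun n hn => Subgroup.subset_normalClosure ⟨n, hn, rfl⟩
  rw [← hN'true]
  refine mem_of_of_mem_normalClosure N' (fun b => ?_) <|
    Subgroup.normalClosure_mono
    (Set.subset_iUnion_of_subset true (by rw [hN'true, Subgroup.coe_map])) hg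
  cases b
  · exact MonoidHom.injective_comp_of_ker_inf_range_eq_bot (hφ false) (by simp [hN'false])
  · exact MonoidHom.injective_comp_of_ker_inf_range_eq_bot (hφ true) (by simpa [hN'true] using hNC)

/-- **The relative relation module of a Dehn filling of an amalgamated free product.**
Let `G = A ∗_C B` be an amalgamated free product of groups `A = K true` and `B = K false`
over a common group `C`, given by injective homomorphisms `φ b : C →* K b`. Let `N` be a
normal subgroup of `A` meeting the image of `C` trivially, `⟪N⟫` the normal closure of
(the image of) `N` in `G`, `Q = G/⟪N⟫` and `R = A/N`. Then
`Rel(G, ⟪N⟫) ≅ ℤQ ⊗_{ℤR} Rel(A, N)` as `ℤQ`-modules. -/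
theorem amalgamated_relModule {C : Type*} [Group C] {K : Bool → Type*}
    [∀ b, Group (K b)] (φ : ∀ b, C →* K b) (hφ : ∀ b, Function.Injective (φ b))
    (N : Subgroup (K true)) [N.Normal] (hNC : N ⊓ (φ true).range = ⊥) :
    RelModuleIsoInd (Monoid.PushoutI φ) (Monoid.PushoutI.of (φ := φ) true) N
      (Subgroup.normalClosure
        ((N.map (Monoid.PushoutI.of (φ := φ) true) : Subgroup (Monoid.PushoutI φ)) :
          Set (Monoid.PushoutI φ))) := by
  open Monoid.PushoutI in
  set π := QuotientGroup.mk' (Subgroup.normalClosure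
    ((N.map (of (φ := φ) true) : Subgroup (Monoid.PushoutI φ)) : Set (Monoid.PushoutI φ)))
  have hker : (π.comp (of true)).ker = N := by
    rw [← MonoidHom.comap_ker, QuotientGroup.ker_mk']
    exact Monoid.PushoutI.comap_of_normalClosure_map hφ hNC
  have hbase : (π.comp (of true)).comp (φ true) = π.comp (base φ) := by
    rw [MonoidHom.comp_assoc, of_comp_eq_base]
  obtain ⟨γ, hγ, hγN⟩ := IndRel.exists_isAffineCocycle hker
  obtain ⟨D, hD⟩ := (hγ.comp (φ true)).exists_eq_affineCoboundary
    (MonoidHom.injective_comp_of_ker_inf_range_eq_bot (hφ true) (by rwa [hker]))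
  rw [hbase] at hD
  obtain ⟨Γ, hΓ, hΓof⟩ := exists_isAffineCocycle π
    (fun | true => γ | false => affineCoboundary ℤ (π.comp (of false)) D)
    (fun | true => hγ | false => isAffineCocycle_affineCoboundary _ D)
    (affineCoboundary ℤ (π.comp (base φ)) D) (isAffineCocycle_affineCoboundary _ D)
    (fun | true, c => congrFun hD c
         | false, c => congrArg (affineCoboundary ℤ π D) (of_apply_eq_base φ false c))
  refine relModuleIsoInd_of_isAffineCocycle _ N rfl hΓ fun n q => ?_
  rw [hΓof true n]
  exact hγN n q
end

section
/- Let G = H∗_t be an HNN-extension of a group H with associated subgroups A, B ≤ H. If N is a normal subgroup of H with N ∩ A = {1} and N ∩ B = {1}, then H ∩ ⟪N⟫ = N, where ⟪N⟫ is the normal closure of N in G; equivalently, the natural homomorphism H/N → G/⟪N⟫ is injective. -/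
/-!
Killing `N` in the base group is compatible with the HNN structure: since `N` meets `A` and `B`
trivially, the quotient map `H → H ⧸ N` is injective on `A` and `B`, so `φ` descends to an
isomorphism between their images and `H ⧸ N` carries an HNN-extension `G'` with the same stable
letter. The induced map `G → G'` kills `⟪N⟫`, and on `H` it is `H → H ⧸ N → G'`, whose kernel is
`N` because the base group embeds into an HNN-extension.
-/

open HNNExtension

theorem QuotientGroup.injective_subgroupMap_mk'_of_inf_eq_bot {G : Type*} [Group G]
    (N : Subgroup G) [N.Normal] {K : Subgroup G} (hK : N ⊓ K = ⊥) :
    Function.Injective ((QuotientGroup.mk' N).subgroupMap K) := by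
  refine (injective_iff_map_eq_one _).2 fun k hk => ?_
  have hkN : (k : G) ∈ N := (QuotientGroup.eq_one_iff _).1 (congrArg Subtype.val hk)
  have hk1 : (k : G) ∈ N ⊓ K := ⟨hkN, k.2⟩
  rw [hK, Subgroup.mem_bot] at hk1
  exact Subtype.ext hk1

noncomputable def QuotientGroup.subgroupMapEquiv {G : Type*} [Group G] (N : Subgroup G) [N.Normal]
    {K : Subgroup G} (hK : N ⊓ K = ⊥) : K ≃* K.map (QuotientGroup.mk' N) :=
  MulEquiv.ofBijective _ ⟨QuotientGroup.injective_subgroupMap_mk'_of_inf_eq_bot N hK,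
    (QuotientGroup.mk' N).subgroupMap_surjective K⟩

@[simp]
theorem QuotientGroup.coe_subgroupMapEquiv {G : Type*} [Group G] (N : Subgroup G) [N.Normal]
    {K : Subgroup G} (hK : N ⊓ K = ⊥) (k : K) :
    (QuotientGroup.subgroupMapEquiv N hK k : G ⧸ N) = (k : G) :=
  rfl

theorem MonoidHom.range_inf_normalClosure_map_eq_map {H G Q : Type*} [Group H] [Group G]
    [Group Q] (f : H →* G) (N : Subgroup H) [N.Normal] (ψ : G →* Q) (ι : H ⧸ N →* Q)
    (hι : Function.Injective ι) (hψ : ψ.comp f = ι.comp (QuotientGroup.mk' N)) :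
    f.range ⊓ Subgroup.normalClosure (N.map f : Set G) = N.map f := by
  have hψf (h : H) : ψ (f h) = ι h := DFunLike.congr_fun hψ h
  have hker : Subgroup.normalClosure (N.map f : Set G) ≤ ψ.ker := by
    refine Subgroup.normalClosure_le_normal ?_
    rintro _ ⟨n, hn, rfl⟩
    rw [SetLike.mem_coe, MonoidHom.mem_ker, hψf, (QuotientGroup.eq_one_iff n).2 hn, map_one]
  refine le_antisymm ?_ (le_inf (Subgroup.map_le_range f N) (Subgroup.subset_normalClosure))
  rintro _ ⟨⟨h, rfl⟩, hh⟩
  have hιh : ι h = ι 1 := by rw [← hψf, map_one]; exact hker hh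
  exact ⟨h, (QuotientGroup.eq_one_iff h).1 (hι hιh), rfl⟩

namespace HNNExtension

variable {H : Type*} [Group H] {A B : Subgroup H} (φ : A ≃* B) (N : Subgroup H) [N.Normal]

noncomputable def quotientIso (hA : N ⊓ A = ⊥) (hB : N ⊓ B = ⊥) :
    A.map (QuotientGroup.mk' N) ≃* B.map (QuotientGroup.mk' N) :=
  (QuotientGroup.subgroupMapEquiv N hA).symm.trans (φ.trans (QuotientGroup.subgroupMapEquiv N hB))

@[simp]
theorem quotientIso_subgroupMapEquiv (hA : N ⊓ A = ⊥) (hB : N ⊓ B = ⊥) (a : A) :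
    quotientIso φ N hA hB (QuotientGroup.subgroupMapEquiv N hA a) =
      QuotientGroup.subgroupMapEquiv N hB (φ a) := by
  simp [quotientIso]

noncomputable def quotientHom (hA : N ⊓ A = ⊥) (hB : N ⊓ B = ⊥) :
    HNNExtension H A B φ →* HNNExtension (H ⧸ N) _ _ (quotientIso φ N hA hB) :=
  lift (of.comp (QuotientGroup.mk' N)) t fun a => by
    simpa using t_mul_of (φ := quotientIso φ N hA hB) (QuotientGroup.subgroupMapEquiv N hA a)

theorem quotientHom_comp_of (hA : N ⊓ A = ⊥) (hB : N ⊓ B = ⊥) :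
    (quotientHom φ N hA hB).comp of = of.comp (QuotientGroup.mk' N) :=
  MonoidHom.ext fun _ => by simp [quotientHom]

end HNNExtension

/-- **Dehn filling of an HNN-extension is injective on the base group.**
Let `G = H∗_t` be the HNN-extension of a group `H` with associated subgroups `A, B ≤ H`
(given by an isomorphism `φ : A ≃* B`). If `N` is a normal subgroup of `H` with
`N ∩ A = {1}` and `N ∩ B = {1}`, then `H ∩ ⟪N⟫ = N` in `G` (with `H` and `N` regarded as
subgroups of `G` via the canonical embedding); equivalently the natural homomorphism
`H/N → G/⟪N⟫` is injective. -/
theorem hnn_inf_normalClosure {H : Type*} [Group H] (A B : Subgroup H) (φ : A ≃* B)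
    (N : Subgroup H) [N.Normal] (hA : N ⊓ A = ⊥) (hB : N ⊓ B = ⊥) :
    (MonoidHom.range (HNNExtension.of : H →* HNNExtension H A B φ)) ⊓
        Subgroup.normalClosure
          ((N.map (HNNExtension.of : H →* HNNExtension H A B φ)) :
            Set (HNNExtension H A B φ))
      = N.map (HNNExtension.of : H →* HNNExtension H A B φ) :=
  of.range_inf_normalClosure_map_eq_map N (quotientHom φ N hA hB) of (of_injective _)
    (quotientHom_comp_of φ N hA hB)
end

section
/- Let G = H∗_t be an HNN-extension of a group H with associated subgroups A, B ≤ H. Suppose N is a normal subgroup of H with N ∩ A = {1} and N ∩ B = {1}. Let Q = G/⟪N⟫ and R = H/N, where R is identified with a subgroup of Q via the (injective) natural homomorphism. Then there is an isomorphism of ℤQ-modules Rel(G, ⟪N⟫) ≅ ℤQ ⊗_{ℤR} Rel(H, N). -/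
open scoped TensorProduct

/-!
Write `K = ⟪N⟫`, `Q = G/K` and `Ind = ℤQ ⊗_{ℤH} Rel(H, N)`. For any homomorphism `f : H → G`,
`q ⊗ n ↦ [s(q) f(n) s(q)⁻¹]` (with `s(q)` any lift of `q`) is a well-defined `Q`-equivariant map
`Ind → Rel(G, K)`. An inverse comes from a crossed homomorphism `D` of `G` into the coinduced module
`Map(Q, Ind)` with `D(f n)(x) = x⁻¹ ⊗ n`: on `K` it is a homomorphism, and `[k] ↦ D(k)(1)` inverts
the first map.

For the HNN extension, `R = H/N` embeds in `Q`: `G` maps to the HNN extension of `R` along the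
images of `A` and `B` (still identified by `φ`, as `N ∩ A = N ∩ B = 1`), and this map kills `K`.
As `R` then acts freely on `Q`, `D` can be written down on `H` from an `R`-equivariant map
`Q → R`. It extends over the stable letter because `B` also acts freely on `Q`: by Shapiro's
lemma `H¹(B, Map(Q, Ind)) = 0`, so the two lifts `b ↦ (D b, b)` and `b ↦ t (D (φ⁻¹ b), φ⁻¹ b) t⁻¹`
of `B` to `Map(Q, Ind) ⋊ Q` are conjugate.
-/

theorem Subgroup.normalClosure_induction {G : Type*} [Group G] {s : Set G}
    {p : (g : G) → g ∈ Subgroup.normalClosure s → Prop}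
    (mem : ∀ x (hx : x ∈ s), p x (Subgroup.subset_normalClosure hx))
    (one : p 1 (one_mem _))
    (mul : ∀ x y hx hy, p x hx → p y hy → p (x * y) (mul_mem hx hy))
    (inv : ∀ x hx, p x hx → p x⁻¹ (inv_mem hx))
    (conj : ∀ g x hx, p x hx →
      p (g * x * g⁻¹) (Subgroup.normalClosure_normal.conj_mem x hx g))
    {x : G} (hx : x ∈ Subgroup.normalClosure s) : p x hx := by
  let S : Subgroup G :=
    { carrier := {x | ∃ hx, p x hx}
      one_mem' := ⟨_, one⟩
      mul_mem' := fun ⟨_, hx⟩ ⟨_, hy⟩ => ⟨_, mul _ _ _ _ hx hy⟩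
      inv_mem' := fun ⟨_, hx⟩ => ⟨_, inv _ _ hx⟩ }
  have : S.Normal := ⟨fun x ⟨_, hx⟩ g => ⟨_, conj g x _ hx⟩⟩
  obtain ⟨_, h⟩ := Subgroup.normalClosure_le_normal (N := S) (fun x hx => ⟨_, mem x hx⟩) hx
  exact h

theorem exists_equivariant_of_injective {S Q : Type*} [Group S] [Group Q] {ι : S →* Q}
    (hι : Function.Injective ι) : ∃ ρ : Q → S, ∀ s x, ρ (ι s * x) = s * ρ x := by
  let rep : Q → Q := fun x => (Quotient.mk (QuotientGroup.rightRel ι.range) x).out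
  have hrep : ∀ s x, rep (ι s * x) = rep x := fun s x =>
    congrArg Quotient.out <| Quotient.sound <| QuotientGroup.rightRel_apply.2 ⟨s⁻¹, by simp⟩
  have : ∀ x, ∃ s, ι s * rep x = x := fun x => by
    obtain ⟨s, hs⟩ := QuotientGroup.rightRel_apply.1
      (Quotient.mk_out (s := QuotientGroup.rightRel ι.range) x)
    exact ⟨s, by rw [hs, inv_mul_cancel_right]⟩
  choose ρ hρ using this
  refine ⟨ρ, fun s x => hι (mul_right_cancel (b := rep x) ?_)⟩
  rw [map_mul, mul_assoc, hρ, ← hrep s x, hρ]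

noncomputable section

namespace RelationModule

abbrev RelMod {G : Type*} [Group G] (K : Subgroup G) := Additive (Abelianization K)

variable {G : Type*} [Group G]

theorem RelMod.exists_eq_ofMul_of {K : Subgroup G} (x : RelMod K) :
    ∃ k : K, x = .ofMul (.of k) :=
  (Quotient.exists_rep x).imp fun _ h => h.symm

def relAction (K : Subgroup G) [K.Normal] : G →* Module.End ℤ (RelMod K) where
  toFun g := (MonoidHom.toAdditive
    (Abelianization.map (MulAut.conjNormal g).toMonoidHom)).toIntLinearMap
  map_one' := by
    ext x
    obtain ⟨k, rfl⟩ := RelMod.exists_eq_ofMul_of x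
    simp [Abelianization.map_of]
  map_mul' g h := by
    ext x
    obtain ⟨k, rfl⟩ := RelMod.exists_eq_ofMul_of x
    simp [Abelianization.map_of]

theorem relAction_ofMul_of (K : Subgroup G) [K.Normal] (g : G) (k : K) :
    relAction K g (.ofMul (.of k)) =
      .ofMul (.of ⟨g * k * g⁻¹, ‹K.Normal›.conj_mem k k.2 g⟩) :=
  rfl

theorem relAction_eq_one_of_mem (K : Subgroup G) [K.Normal] {k : G} (hk : k ∈ K) :
    relAction K k = 1 := by
  ext x
  obtain ⟨k', rfl⟩ := RelMod.exists_eq_ofMul_of x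
  have hconj : Abelianization.of (⟨k, hk⟩ * k' * ⟨k, hk⟩⁻¹) = Abelianization.of k' := by
    rw [map_mul, map_mul, map_inv, mul_inv_cancel_comm]
  rw [relAction_ofMul_of, Module.End.one_apply, ← hconj]
  rfl

section Induced

variable {Q H : Type*} [Group Q] [Group H] {N : Subgroup H} [N.Normal]

abbrev Ind (N : Subgroup H) [N.Normal] (f : H →* Q) :=
  (MonoidAlgebra ℤ Q ⊗[ℤ] RelMod N) ⧸ relSub Q H N f

def indTmul (f : H →* Q) (q : Q) : RelMod N →+ Ind N f :=
  (relSub Q H N f).mkQ.toAddMonoidHom.comp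
    (TensorProduct.mk ℤ _ (RelMod N) (MonoidAlgebra.of ℤ Q q)).toAddMonoidHom

variable (f : H →* Q)

theorem indTmul_apply (q : Q) (m : RelMod N) :
    indTmul f q m = Submodule.Quotient.mk (MonoidAlgebra.of ℤ Q q ⊗ₜ m) := rfl

theorem indTmul_mul_apply (q : Q) (h : H) (m : RelMod N) :
    indTmul f (q * f h) m = indTmul f q (relAction N h m) := by
  rw [indTmul_apply, indTmul_apply, Submodule.Quotient.eq]
  exact Submodule.subset_span ⟨_, h, m, by rw [map_mul]; rfl⟩

theorem of_smul_indTmul (q' q : Q) (m : RelMod N) :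
    MonoidAlgebra.of ℤ Q q' • indTmul f q m = indTmul f (q' * q) m := by
  rw [indTmul_apply, indTmul_apply, ← Submodule.Quotient.mk_smul, TensorProduct.smul_tmul',
    smul_eq_mul, map_mul]

theorem Ind.addHom_ext {X : Type*} [AddCommGroup X] {F F' : Ind N f →+ X}
    (h : ∀ q m, F (indTmul f q m) = F' (indTmul f q m)) : F = F' := by
  ext z
  obtain ⟨t, rfl⟩ := Submodule.Quotient.mk_surjective _ z
  induction t using TensorProduct.induction_on with
  | zero => simp only [Submodule.Quotient.mk_zero, map_zero]
  | add u v hu hv => simp only [Submodule.Quotient.mk_add, map_add, hu, hv]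
  | tmul a m =>
    induction a using MonoidAlgebra.induction_linear with
    | zero => simp only [TensorProduct.zero_tmul, Submodule.Quotient.mk_zero, map_zero]
    | add a b ha hb =>
      simp only [TensorProduct.add_tmul, Submodule.Quotient.mk_add, map_add, ha, hb]
    | single q c =>
      rw [← mul_one c, ← MonoidAlgebra.smul_single', ← TensorProduct.smul_tmul',
        Submodule.Quotient.mk_smul, map_zsmul, map_zsmul]
      exact congrArg (c • ·) (h q m)

end Induced

section IndToRel

variable {G H : Type*} [Group G] [Group H] {f : H →* G} {N : Subgroup H} {K : Subgroup G}

def relMap (hNK : N.map f ≤ K) : RelMod N →ₗ[ℤ] RelMod K :=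
  (MonoidHom.toAdditive (Abelianization.map ((f.comp N.subtype).codRestrict K
    fun n => hNK (Subgroup.mem_map_of_mem f n.2)))).toIntLinearMap

theorem relMap_ofMul_of (hNK : N.map f ≤ K) (n : N) :
    relMap hNK (.ofMul (.of n)) = .ofMul (.of ⟨f n, hNK (Subgroup.mem_map_of_mem f n.2)⟩) :=
  rfl

variable [K.Normal]

variable (K) in
def relActionQuot : G ⧸ K →* Module.End ℤ (RelMod K) :=
  QuotientGroup.lift K (relAction K) fun _ hk => relAction_eq_one_of_mem K hk

theorem relActionQuot_mk (g : G) : relActionQuot K g = relAction K g := rfl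

def tensorToRel (hNK : N.map f ≤ K) :
    MonoidAlgebra ℤ (G ⧸ K) ⊗[ℤ] RelMod N →ₗ[ℤ] RelMod K :=
  TensorProduct.lift (LinearMap.lcomp ℤ (RelMod K) (relMap hNK) ∘ₗ
    (MonoidAlgebra.lift ℤ (Module.End ℤ (RelMod K)) (G ⧸ K) (relActionQuot K)).toLinearMap)

theorem tensorToRel_tmul (hNK : N.map f ≤ K) (a : MonoidAlgebra ℤ (G ⧸ K)) (m : RelMod N) :
    tensorToRel hNK (a ⊗ₜ m) =
      MonoidAlgebra.lift ℤ (Module.End ℤ (RelMod K)) (G ⧸ K) (relActionQuot K) a (relMap hNK m) :=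
  rfl

theorem tensorToRel_smul (hNK : N.map f ≤ K) (b : MonoidAlgebra ℤ (G ⧸ K))
    (t : MonoidAlgebra ℤ (G ⧸ K) ⊗[ℤ] RelMod N) :
    tensorToRel hNK (b • t) =
      MonoidAlgebra.lift ℤ (Module.End ℤ (RelMod K)) (G ⧸ K) (relActionQuot K) b
        (tensorToRel hNK t) := by
  induction t using TensorProduct.induction_on with
  | zero => simp only [smul_zero, map_zero]
  | add u v hu hv => simp only [smul_add, map_add, hu, hv]
  | tmul a m =>
    rw [TensorProduct.smul_tmul', tensorToRel_tmul, tensorToRel_tmul, smul_eq_mul, map_mul,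
      Module.End.mul_apply]

variable [N.Normal]

theorem relMap_relAction (hNK : N.map f ≤ K) (h : H) (m : RelMod N) :
    relMap hNK (relAction N h m) = relAction K (f h) (relMap hNK m) := by
  obtain ⟨n, rfl⟩ := RelMod.exists_eq_ofMul_of m
  rw [relAction_ofMul_of, relMap_ofMul_of, relMap_ofMul_of, relAction_ofMul_of]
  simp only [map_mul, map_inv]

theorem tensorToRel_eq_zero_of_mem (hNK : N.map f ≤ K) {t : MonoidAlgebra ℤ (G ⧸ K) ⊗[ℤ] RelMod N}
    (ht : t ∈ relSub (G ⧸ K) H N ((QuotientGroup.mk' K).comp f)) : tensorToRel hNK t = 0 := by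
  induction ht using Submodule.span_induction with
  | mem t ht =>
    obtain ⟨a, h, m, rfl⟩ := ht
    rw [map_sub, sub_eq_zero, tensorToRel_tmul, tensorToRel_tmul, map_mul, Module.End.mul_apply,
      MonoidAlgebra.lift_of]
    exact congrArg _ (relMap_relAction hNK h m).symm
  | zero => exact map_zero _
  | add u v _ _ hu hv => rw [map_add, hu, hv, add_zero]
  | smul b u _ hu => rw [tensorToRel_smul, hu, map_zero]

def indToRel (hNK : N.map f ≤ K) : Ind N ((QuotientGroup.mk' K).comp f) →+ RelMod K :=
  QuotientAddGroup.lift _ (tensorToRel hNK).toAddMonoidHom fun _ ht =>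
    tensorToRel_eq_zero_of_mem hNK ht

theorem indToRel_indTmul (hNK : N.map f ≤ K) (q : G ⧸ K) (m : RelMod N) :
    indToRel hNK (indTmul _ q m) = relActionQuot K q (relMap hNK m) := by
  rw [indTmul_apply]
  exact (tensorToRel_tmul hNK _ m).trans (by rw [MonoidAlgebra.lift_of])

theorem indToRel_of_smul (hNK : N.map f ≤ K) (q : G ⧸ K)
    (z : Ind N ((QuotientGroup.mk' K).comp f)) :
    indToRel hNK (MonoidAlgebra.of ℤ _ q • z) = relActionQuot K q (indToRel hNK z) := by
  obtain ⟨t, rfl⟩ := Submodule.Quotient.mk_surjective _ z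
  show tensorToRel hNK _ = _
  rw [tensorToRel_smul, MonoidAlgebra.lift_of]
  rfl

end IndToRel

/-- A homomorphism into `CoindSemidirect Q M` with right component `ι` amounts to a crossed
homomorphism, read off by `coindVal`, into the coinduced module `Q → M` on which `q` acts by
`(q • v) x = v (q⁻¹ * x)`. -/
abbrev CoindSemidirect (Q M : Type*) [Group Q] [AddCommGroup M] :=
  (Q → Multiplicative M) ⋊[mulAutArrow] Q

section Coinduced

variable {Q M : Type*} [Group Q] [AddCommGroup M]

def coindVal (w : CoindSemidirect Q M) (x : Q) : M := (w.left x).toAdd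

theorem coindVal_mul (w w' : CoindSemidirect Q M) (x : Q) :
    coindVal (w * w') x = coindVal w x + coindVal w' (w.right⁻¹ * x) := rfl

theorem coindVal_one (x : Q) : coindVal (1 : CoindSemidirect Q M) x = 0 := rfl

theorem coindVal_inl (v : Q → Multiplicative M) (x : Q) :
    coindVal (SemidirectProduct.inl v : CoindSemidirect Q M) x = (v x).toAdd := rfl

theorem coind_ext {w w' : CoindSemidirect Q M} (hleft : ∀ x, coindVal w x = coindVal w' x)
    (hright : w.right = w'.right) : w = w' :=
  SemidirectProduct.ext (funext fun x => Multiplicative.toAdd.injective (hleft x)) hright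

/-- Shapiro's lemma for a free action: `H¹(S, Q → M) = 0`. The coboundary is `v x = d (ρ x) x`
for an `S`-equivariant `ρ : Q → S`. -/
theorem exists_coboundary_of_injective {S : Type*} [Group S] {ι : S →* Q}
    (hι : Function.Injective ι) (d : S → Q → M)
    (hd : ∀ s t x, d (s * t) x = d s x + d t ((ι s)⁻¹ * x)) :
    ∃ v : Q → M, ∀ s x, d s x = v x - v ((ι s)⁻¹ * x) := by
  obtain ⟨ρ, hρ⟩ := exists_equivariant_of_injective hι
  have hd_one : ∀ x, d 1 x = 0 := fun x => by simpa using hd 1 1 x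
  have hd_inv : ∀ s x, d s⁻¹ ((ι s)⁻¹ * x) = - d s x := fun s x => by
    have := hd s s⁻¹ x
    rw [mul_inv_cancel, hd_one] at this
    exact (neg_eq_of_add_eq_zero_right this.symm).symm
  refine ⟨fun x => d (ρ x) x, fun s x => ?_⟩
  have hρ_inv : ρ ((ι s)⁻¹ * x) = s⁻¹ * ρ x := by rw [← map_inv, hρ]
  simp only [hρ_inv, hd, hd_inv, map_inv, inv_inv, mul_inv_cancel_left]
  abel

theorem exists_conj_eq_of_right_eq {S : Type*} [Group S] {β β' : S →* CoindSemidirect Q M}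
    (hright : ∀ s, (β' s).right = (β s).right)
    (hfree : Function.Injective (SemidirectProduct.rightHom.comp β)) :
    ∃ v, ∀ s, SemidirectProduct.inl v * β' s * (SemidirectProduct.inl v)⁻¹ = β s := by
  let d : S → Q → M := fun s => coindVal (β s * (β' s)⁻¹)
  have hd : ∀ s t x, d (s * t) x = d s x + d t ((β s).right⁻¹ * x) := fun s t x => by
    have : β (s * t) * (β' (s * t))⁻¹ = β s * (β t * (β' t)⁻¹) * (β' s)⁻¹ := by
      simp only [map_mul, mul_inv_rev, mul_assoc]
    simp only [d]
    rw [this]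
    simp only [coindVal_mul, SemidirectProduct.mul_right, SemidirectProduct.inv_right, hright,
      mul_inv_cancel, mul_one]
    abel
  obtain ⟨v, hv⟩ := exists_coboundary_of_injective hfree d hd
  refine ⟨fun x => .ofAdd (v x), fun s => mul_right_cancel (b := (β' s)⁻¹) ?_⟩
  rw [mul_assoc, mul_assoc]
  refine coind_ext (fun x => ?_) ?_
  · have hcancel : coindVal (β' s) x + coindVal (β' s)⁻¹ ((β s).right⁻¹ * x) = 0 := by
      rw [← hright, ← coindVal_mul, mul_inv_cancel, coindVal_one]
    change coindVal (_ * (β' s * (_ * (β' s)⁻¹))) x = d s x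
    rw [hv, ← map_inv, coindVal_mul, coindVal_mul, coindVal_mul, coindVal_inl, coindVal_inl]
    simp only [SemidirectProduct.right_inl, inv_one, one_mul, hright, Pi.inv_apply, toAdd_inv,
      toAdd_ofAdd, MonoidHom.comp_apply, SemidirectProduct.rightHom_eq_right]
    rw [← add_zero (v x - _), ← hcancel]
    abel
  · simp [hright]

end Coinduced

section FillingKernel

variable {G H : Type*} [Group G] [Group H] (f : H →* G) (N : Subgroup H)

def fillingKernel : Subgroup G := Subgroup.normalClosure (N.map f : Set G)

instance : (fillingKernel f N).Normal := Subgroup.normalClosure_normal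

theorem map_le_fillingKernel : N.map f ≤ fillingKernel f N := Subgroup.subset_normalClosure

variable {f N}

theorem RelMod.mem_of_relAction_mem {S : AddSubgroup (RelMod (fillingKernel f N))}
    (hmap : ∀ n : N, relMap (map_le_fillingKernel f N) (.ofMul (.of n)) ∈ S)
    (hact : ∀ g, ∀ x ∈ S, relAction _ g x ∈ S) (x : RelMod (fillingKernel f N)) : x ∈ S := by
  obtain ⟨⟨k, hk⟩, rfl⟩ := RelMod.exists_eq_ofMul_of x
  induction hk using Subgroup.normalClosure_induction with
  | mem k hk =>
    obtain ⟨n, hn, rfl⟩ := hk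
    exact hmap ⟨n, hn⟩
  | one => exact S.zero_mem
  | mul k k' _ _ hk hk' => exact S.add_mem hk hk'
  | inv k _ hk => exact S.neg_mem hk
  | conj g k _ hk => exact hact g _ hk

end FillingKernel

section RelToInd

variable {G H : Type*} [Group G] [Group H] {f : H →* G} {N : Subgroup H} [N.Normal]
  (Φ : G →* CoindSemidirect (G ⧸ fillingKernel f N)
    (Ind N ((QuotientGroup.mk' (fillingKernel f N)).comp f)))

theorem coindVal_mul_of_mem (hΦ : ∀ g, (Φ g).right = g) {k : G} (hk : k ∈ fillingKernel f N)
    (g : G) (x : G ⧸ fillingKernel f N) :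
    coindVal (Φ (k * g)) x = coindVal (Φ k) x + coindVal (Φ g) x := by
  rw [map_mul, coindVal_mul, hΦ, (QuotientGroup.eq_one_iff k).2 hk, inv_one, one_mul]

theorem coindVal_conj (hΦ : ∀ g, (Φ g).right = g) {k : G} (hk : k ∈ fillingKernel f N)
    (g : G) (x : G ⧸ fillingKernel f N) :
    coindVal (Φ (g * k * g⁻¹)) x = coindVal (Φ k) ((g : G ⧸ fillingKernel f N)⁻¹ * x) := by
  have hcancel :
      coindVal (Φ g) x + coindVal (Φ g⁻¹) ((g : G ⧸ fillingKernel f N)⁻¹ * x) = 0 := by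
    rw [← hΦ g, ← coindVal_mul, ← map_mul, mul_inv_cancel, map_one, coindVal_one]
  rw [map_mul, map_mul, coindVal_mul, coindVal_mul, SemidirectProduct.mul_right, hΦ, hΦ,
    (QuotientGroup.eq_one_iff k).2 hk, mul_one, add_right_comm, hcancel, zero_add]

theorem coindVal_eq_smul (hΦ : ∀ g, (Φ g).right = g)
    (hΦN : ∀ (n : N) x, coindVal (Φ (f n)) x = indTmul _ x⁻¹ (.ofMul (.of n)))
    {k : G} (hk : k ∈ fillingKernel f N) (x : G ⧸ fillingKernel f N) :
    coindVal (Φ k) x = MonoidAlgebra.of ℤ _ x⁻¹ • coindVal (Φ k) 1 := by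
  induction hk using Subgroup.normalClosure_induction generalizing x with
  | mem k hk =>
    obtain ⟨n, hn, rfl⟩ := hk
    rw [hΦN ⟨n, hn⟩, hΦN ⟨n, hn⟩, of_smul_indTmul, inv_one, mul_one]
  | one => rw [map_one, coindVal_one, coindVal_one, smul_zero]
  | mul k k' hk _ ih ih' =>
    rw [coindVal_mul_of_mem Φ hΦ hk, coindVal_mul_of_mem Φ hΦ hk, ih, ih', smul_add]
  | inv k hk ih =>
    have hneg : ∀ y, coindVal (Φ k⁻¹) y = -coindVal (Φ k) y := fun y =>
      eq_neg_of_add_eq_zero_right (by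
        rw [← coindVal_mul_of_mem Φ hΦ hk, mul_inv_cancel, map_one, coindVal_one])
    rw [hneg, hneg, ih, smul_neg]
  | conj g k hk ih =>
    rw [coindVal_conj Φ hΦ hk, coindVal_conj Φ hΦ hk, ih, ih ((g : G ⧸ fillingKernel f N)⁻¹ * 1),
      smul_smul, ← map_mul]
    group

def relToInd (hΦ : ∀ g, (Φ g).right = g) :
    RelMod (fillingKernel f N) →+ Ind N ((QuotientGroup.mk' (fillingKernel f N)).comp f) :=
  MonoidHom.toAdditiveLeft <| Abelianization.lift
    { toFun := fun k => (Φ k).left 1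
      map_one' := by rw [Subgroup.coe_one, map_one]; rfl
      map_mul' := fun k k' => Multiplicative.toAdd.injective (coindVal_mul_of_mem Φ hΦ k.2 k' 1) }

theorem relToInd_ofMul_of (hΦ : ∀ g, (Φ g).right = g) (k : fillingKernel f N) :
    relToInd Φ hΦ (.ofMul (.of k)) = coindVal (Φ k) 1 := rfl

theorem relToInd_relAction (hΦ : ∀ g, (Φ g).right = g)
    (hΦN : ∀ (n : N) x, coindVal (Φ (f n)) x = indTmul _ x⁻¹ (.ofMul (.of n)))
    (g : G) (x : RelMod (fillingKernel f N)) :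
    relToInd Φ hΦ (relAction _ g x) =
      MonoidAlgebra.of ℤ _ (g : G ⧸ fillingKernel f N) • relToInd Φ hΦ x := by
  obtain ⟨k, rfl⟩ := RelMod.exists_eq_ofMul_of x
  rw [relAction_ofMul_of, relToInd_ofMul_of, relToInd_ofMul_of, coindVal_conj Φ hΦ k.2, mul_one,
    coindVal_eq_smul Φ hΦ hΦN k.2, inv_inv]

theorem relToInd_relMap (hΦ : ∀ g, (Φ g).right = g)
    (hΦN : ∀ (n : N) x, coindVal (Φ (f n)) x = indTmul _ x⁻¹ (.ofMul (.of n))) (m : RelMod N) :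
    relToInd Φ hΦ (relMap (map_le_fillingKernel f N) m) = indTmul _ 1 m := by
  obtain ⟨n, rfl⟩ := RelMod.exists_eq_ofMul_of m
  rw [relMap_ofMul_of, relToInd_ofMul_of, hΦN, inv_one]

theorem relToInd_indToRel (hΦ : ∀ g, (Φ g).right = g)
    (hΦN : ∀ (n : N) x, coindVal (Φ (f n)) x = indTmul _ x⁻¹ (.ofMul (.of n)))
    (z : Ind N ((QuotientGroup.mk' (fillingKernel f N)).comp f)) :
    relToInd Φ hΦ (indToRel (map_le_fillingKernel f N) z) = z := by
  suffices (relToInd Φ hΦ).comp (indToRel (map_le_fillingKernel f N)) = .id _ from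
    DFunLike.congr_fun this z
  refine Ind.addHom_ext _ fun q m => ?_
  induction q using QuotientGroup.induction_on with | H g => ?_
  rw [AddMonoidHom.comp_apply, indToRel_indTmul, relActionQuot_mk, relToInd_relAction Φ hΦ hΦN,
    relToInd_relMap Φ hΦ hΦN, of_smul_indTmul, mul_one, AddMonoidHom.id_apply]

theorem indToRel_relToInd (hΦ : ∀ g, (Φ g).right = g)
    (hΦN : ∀ (n : N) x, coindVal (Φ (f n)) x = indTmul _ x⁻¹ (.ofMul (.of n)))
    (x : RelMod (fillingKernel f N)) :
    indToRel (map_le_fillingKernel f N) (relToInd Φ hΦ x) = x := by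
  refine RelMod.mem_of_relAction_mem
    (S := ((indToRel (map_le_fillingKernel f N)).comp (relToInd Φ hΦ)).eqLocus (.id _))
    (fun n => ?_) (fun g y hy => ?_) x
  · show indToRel _ (relToInd Φ hΦ _) = _
    rw [relToInd_relMap Φ hΦ hΦN, indToRel_indTmul, map_one, Module.End.one_apply,
      AddMonoidHom.id_apply]
  · show indToRel _ (relToInd Φ hΦ _) = _
    rw [relToInd_relAction Φ hΦ hΦN, indToRel_of_smul, relActionQuot_mk]
    exact congrArg _ hy

theorem relModuleIsoInd_of_lift (hΦ : ∀ g, (Φ g).right = g)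
    (hΦN : ∀ (n : N) x, coindVal (Φ (f n)) x = indTmul _ x⁻¹ (.ofMul (.of n))) :
    RelModuleIsoInd G f N (fillingKernel f N) :=
  ⟨{ toFun := relToInd Φ hΦ
     invFun := indToRel (map_le_fillingKernel f N)
     left_inv := indToRel_relToInd Φ hΦ hΦN
     right_inv := relToInd_indToRel Φ hΦ hΦN
     map_add' := map_add _ }, relToInd_relAction Φ hΦ hΦN⟩

end RelToInd

section StandardLift

variable {Q H : Type*} [Group Q] [Group H] {N : Subgroup H} [N.Normal] {f : H →* Q}

theorem exists_equivariant_section (hf : f.ker = N) :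
    ∃ c : Q → H, ∀ h x, (c (f h * x) : H ⧸ N) = h * c x := by
  subst hf
  obtain ⟨ρ, hρ⟩ := exists_equivariant_of_injective (QuotientGroup.kerLift_injective f)
  refine ⟨fun x => (ρ x).out, fun h x => ?_⟩
  rw [QuotientGroup.out_eq', QuotientGroup.out_eq', ← QuotientGroup.kerLift_mk f h, hρ]

theorem exists_lift_of_ker_eq (hf : f.ker = N) :
    ∃ ψ : H →* CoindSemidirect Q (Ind N f), (∀ h, (ψ h).right = f h) ∧
      ∀ (n : N) x, coindVal (ψ n) x = indTmul f x⁻¹ (.ofMul (.of n)) := by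
  obtain ⟨c, hc⟩ := exists_equivariant_section hf
  have hmem : ∀ h x, h * c ((f h)⁻¹ * x) * (c x)⁻¹ ∈ N := fun h x => by
    rw [← QuotientGroup.eq_one_iff, QuotientGroup.mk_mul, QuotientGroup.mk_mul,
      QuotientGroup.mk_inv, ← map_inv, hc, QuotientGroup.mk_inv]
    group
  let μ : H → Q → N := fun h x => ⟨_, hmem h x⟩
  have hμ_mul : ∀ h h' x, μ (h * h') x =
      ⟨h * μ h' ((f h)⁻¹ * x) * h⁻¹, ‹N.Normal›.conj_mem _ (μ h' _).2 h⟩ * μ h x := fun h h' x => by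
    apply Subtype.ext
    simp only [μ, map_mul, mul_inv_rev, Subgroup.coe_mul, mul_assoc]
    group
  refine ⟨{ toFun := fun h => ⟨fun x => .ofAdd (indTmul f x⁻¹ (.ofMul (.of (μ h x)))), f h⟩
            map_one' := coind_ext (fun x => ?_) (map_one f)
            map_mul' := fun h h' => coind_ext (fun x => ?_) (map_mul f h h') },
    fun h => rfl, fun n x => ?_⟩
  · show indTmul f x⁻¹ (.ofMul (.of (μ 1 x))) = 0
    rw [show μ 1 x = 1 from Subtype.ext (by simp [μ]), map_one]
    exact map_zero _
  · rw [coindVal_mul]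
    show indTmul f x⁻¹ (.ofMul (.of (μ (h * h') x))) = indTmul f x⁻¹ (.ofMul (.of (μ h x))) +
      indTmul f ((f h)⁻¹ * x)⁻¹ (.ofMul (.of (μ h' ((f h)⁻¹ * x))))
    rw [mul_inv_rev, inv_inv, indTmul_mul_apply, relAction_ofMul_of, ← map_add, hμ_mul, map_mul,
      ofMul_mul, add_comm]
  · have hn : f n = 1 := by rw [← MonoidHom.mem_ker, hf]; exact n.2
    show indTmul f x⁻¹ (.ofMul (.of (μ n x))) = _
    rw [show μ n x = n from Subtype.ext (by simp [μ, hn])]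

end StandardLift

theorem injective_comp_subtype_of_ker_inf_eq_bot {Q H : Type*} [Group Q] [Group H] {f : H →* Q}
    {A : Subgroup H} (h : f.ker ⊓ A = ⊥) : Function.Injective (f.comp A.subtype) := by
  refine (injective_iff_map_eq_one _).2 fun a ha => Subtype.ext ?_
  have ha' : (a : H) ∈ f.ker ⊓ A := ⟨ha, a.2⟩
  rwa [h, Subgroup.mem_bot] at ha'

section HNN

variable {H : Type*} [Group H] {A B : Subgroup H} {φ : A ≃* B}

theorem exists_hnnExtension_lift {Q M : Type*} [Group Q] [AddCommGroup M]
    (ψ : H →* CoindSemidirect Q M) (τ : Q) (hτ : ∀ a : A, τ * (ψ a).right = (ψ (φ a)).right * τ)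
    (hB : Function.Injective (SemidirectProduct.rightHom.comp (ψ.comp B.subtype))) :
    ∃ Φ : HNNExtension H A B φ →* CoindSemidirect Q M,
      (∀ h, Φ (HNNExtension.of h) = ψ h) ∧ (Φ HNNExtension.t).right = τ := by
  let β' : B →* CoindSemidirect Q M := (MulAut.conj (SemidirectProduct.inr τ)).toMonoidHom.comp
    (ψ.comp (A.subtype.comp φ.symm.toMonoidHom))
  have hright : ∀ b, (β' b).right = (ψ.comp B.subtype b).right := fun b => by
    have := hτ (φ.symm b)
    simp only [MulEquiv.apply_symm_apply] at this
    simp [β', this]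
  obtain ⟨v, hv⟩ := exists_conj_eq_of_right_eq hright hB
  refine ⟨HNNExtension.lift ψ (.inl v * .inr τ) fun a => ?_, HNNExtension.lift_of _ _ _,
    by simp [HNNExtension.lift_t]⟩
  have h := hv (φ a)
  simp only [β', MonoidHom.comp_apply, MulEquiv.coe_toMonoidHom, MulAut.conj_apply,
    Subgroup.coe_subtype, MulEquiv.symm_apply_apply] at h
  rw [← h]
  group

variable {N : Subgroup H} [N.Normal]

theorem ker_mk_fillingKernel_comp_of (hA : N ⊓ A = ⊥) (hB : N ⊓ B = ⊥) :
    ((QuotientGroup.mk' (fillingKernel HNNExtension.of N)).comp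
      (HNNExtension.of : H →* HNNExtension H A B φ)).ker = N := by
  rw [← QuotientGroup.ker_mk' N] at hA hB
  have hA' := injective_comp_subtype_of_ker_inf_eq_bot hA
  have hB' := injective_comp_subtype_of_ker_inf_eq_bot hB
  let φ' := (MonoidHom.ofInjective hA').symm.trans (φ.trans (MonoidHom.ofInjective hB'))
  let u : HNNExtension H A B φ →* HNNExtension (H ⧸ N) _ _ φ' :=
    HNNExtension.lift (HNNExtension.of.comp (QuotientGroup.mk' N)) HNNExtension.t fun a => by
      simpa [φ', MonoidHom.ofInjective_apply] using
        HNNExtension.t_mul_of (φ := φ') (MonoidHom.ofInjective hA' a)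
  have hKu : fillingKernel HNNExtension.of N ≤ u.ker := by
    refine Subgroup.normalClosure_le_normal ?_
    rintro _ ⟨n, hn, rfl⟩
    simp [u, (QuotientGroup.eq_one_iff n).2 hn]
  refine le_antisymm (fun h hh => ?_) fun n hn => ?_
  · have := hKu ((QuotientGroup.eq_one_iff _).1 hh)
    have hof : (HNNExtension.of (h : H ⧸ N) : HNNExtension _ _ _ φ') = HNNExtension.of 1 := by
      simpa [u] using this
    exact (QuotientGroup.eq_one_iff h).1 (HNNExtension.of_injective (φ := φ') hof)
  · exact (QuotientGroup.eq_one_iff _).2 (map_le_fillingKernel _ _ ⟨n, hn, rfl⟩)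

end HNN

end RelationModule

end

open RelationModule

/-- **The relative relation module of a Dehn filling of an HNN-extension.**
Let `G = H∗_t` be the HNN-extension of a group `H` with associated subgroups `A, B ≤ H`
(given by an isomorphism `φ : A ≃* B`). Let `N` be a normal subgroup of `H` with
`N ∩ A = {1}` and `N ∩ B = {1}`, let `⟪N⟫` be the normal closure of (the image of) `N`
in `G`, `Q = G/⟪N⟫` and `R = H/N`. Then `Rel(G, ⟪N⟫) ≅ ℤQ ⊗_{ℤR} Rel(H, N)` as
`ℤQ`-modules. -/
theorem hnn_relModule {H : Type*} [Group H] (A B : Subgroup H) (φ : A ≃* B)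
    (N : Subgroup H) [N.Normal] (hA : N ⊓ A = ⊥) (hB : N ⊓ B = ⊥) :
    RelModuleIsoInd (HNNExtension H A B φ)
      (HNNExtension.of : H →* HNNExtension H A B φ) N
      (Subgroup.normalClosure
        ((N.map (HNNExtension.of : H →* HNNExtension H A B φ)) :
          Set (HNNExtension H A B φ))) := by
  have hker := ker_mk_fillingKernel_comp_of (φ := φ) hA hB
  obtain ⟨ψ, hψ, hψN⟩ := exists_lift_of_ker_eq hker
  have hfree : Function.Injective (SemidirectProduct.rightHom.comp (ψ.comp B.subtype)) := by
    convert injective_comp_subtype_of_ker_inf_eq_bot (hker ▸ hB) using 1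
    ext b
    exact hψ b
  obtain ⟨Φ, hΦof, hΦt⟩ := exists_hnnExtension_lift ψ (HNNExtension.t : HNNExtension H A B φ)
    (fun a => by rw [hψ, hψ]; exact congrArg QuotientGroup.mk (HNNExtension.t_mul_of a)) hfree
  have hΦ : ∀ g, (Φ g).right = g := by
    suffices SemidirectProduct.rightHom.comp Φ = QuotientGroup.mk' _ from
      fun g => DFunLike.congr_fun this g
    exact HNNExtension.hom_ext (MonoidHom.ext fun h => by simp [hΦof, hψ]) (by simp [hΦt])
  exact relModuleIsoInd_of_lift Φ hΦ fun n x => by rw [hΦof]; exact hψN n x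
end

section
/- Let G be a group, let {H_λ}_{λ∈Λ} be a family of subgroups of G, and for each λ let N_λ be a nontrivial normal subgroup of H_λ. Let N = ⋃_{λ∈Λ} N_λ and let ⟪N⟫ be the normal closure of N in G. If the triple (G, {H_λ}_{λ∈Λ}, {N_λ}_{λ∈Λ}) has the Cohen-Lyndon property, then for every λ ∈ Λ one has H_λ ∩ ⟪N⟫ = N_λ; equivalently, the natural homomorphism H_λ/N_λ → G/⟪N⟫ is injective. -/
/-- A subset `T` of `G` is a left transversal of a subgroup `K` if every left coset
of `K` in `G` contains exactly one element of `T`. -/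
def IsLeftTransversal {G : Type*} [Group G] (K : Subgroup G) (T : Set G) : Prop :=
  ∀ g : G, ∃! t : G, t ∈ T ∧ t⁻¹ * g ∈ K

/-- The normal closure in `G` of (the subgroup generated by) the union of a family of
subgroups `N i`. -/
abbrev familyNC {G : Type*} [Group G] {ι : Type*} (N : ι → Subgroup G) : Subgroup G :=
  Subgroup.normalClosure (⋃ i, (N i : Set G))

/-- The triple `(G, {H i}, {N i})` has the Cohen-Lyndon property, witnessed by the left
transversals `T i` of `H i ⟪N⟫` in `G`: the canonical homomorphism from the free product
of the conjugates `t (N i) t⁻¹`, indexed by pairs `(i, t)` with `t ∈ T i`, to `G` is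
injective with image the normal closure `⟪N⟫`. -/
def CohenLyndonFamilyWith {G : Type*} [Group G] {ι : Type*}
    (H : ι → Subgroup G) (N : ι → Subgroup G) (T : ι → Set G) : Prop :=
  (∀ i, IsLeftTransversal (H i ⊔ familyNC N) (T i)) ∧
  Function.Injective (Monoid.CoprodI.lift
    fun p : (Σ i, ↥(T i)) => ((N p.1).map (MulAut.conj (p.2 : G)).toMonoidHom).subtype) ∧
  (Monoid.CoprodI.lift
    fun p : (Σ i, ↥(T i)) => ((N p.1).map (MulAut.conj (p.2 : G)).toMonoidHom).subtype).range
    = familyNC N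

/-- The triple `(G, {H i}, {N i})` has the Cohen-Lyndon property. -/
def CohenLyndonFamily {G : Type*} [Group G] {ι : Type*}
    (H : ι → Subgroup G) (N : ι → Subgroup G) : Prop :=
  ∃ T : ι → Set G, CohenLyndonFamilyWith H N T

/-!
Fix `t ∈ T i` and `1 ≠ n ∈ N i`. For `g ∈ H i ∩ ⟪N⟫`, the element `x = t g t⁻¹` lies in
`⟪N⟫`, which is the free product of the conjugates `s (N j) s⁻¹`, and since `g` normalises
`N i`, `x` conjugates the nontrivial element `t n t⁻¹` of the factor `t (N i) t⁻¹` back into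
that factor. In a free product this forces `x` to lie in the factor: writing `x⁻¹ = h z` with
`h` in the factor and the reduced word of `z` not starting there, a nontrivial `z` would make
`x c x⁻¹ = z⁻¹ (h⁻¹ c h) z` a reduced word of length at least three for every `c ≠ 1` in the
factor. Hence `x ∈ t (N i) t⁻¹`, that is, `g ∈ N i`.
-/

open Monoid.CoprodI

namespace Monoid.CoprodI
variable {ι : Type*} {G : ι → Type*} [∀ i, Group (G i)]

theorem NeWord.fstIdx_toWord {i j : ι} (w : NeWord G i j) : w.toWord.fstIdx = some i := by
  simp [Word.fstIdx, NeWord.toWord]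

theorem NeWord.length_toList_eq_of_prod_eq {i j k l : ι} {v : NeWord G i j} {w : NeWord G k l}
    (h : v.prod = w.prod) : v.toList.length = w.toList.length := by
  classical
  have : v.toWord = w.toWord := Word.equiv.symm.injective h
  exact congrArg (fun u : Word G => u.toList.length) this

theorem mem_range_of_of_conj_eq_of {p q : ι} {a : G p} {b : G q} (ha : a ≠ 1) {x : CoprodI G}
    (h : x * of a * x⁻¹ = of b) : x ∈ (of : G p →* CoprodI G).range := by
  classical
  set P := Word.equivPair p (Word.equiv x⁻¹)
  have hx : x⁻¹ = of P.head * P.tail.prod := by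
    rw [← Word.prod_rcons, ← Word.equivPair_symm, Equiv.symm_apply_apply]
    exact (Word.equiv.symm_apply_apply _).symm
  by_cases htail : P.tail = Word.empty
  · refine ⟨P.head⁻¹, ?_⟩
    rw [map_inv, ← inv_inv x, hx, htail, Word.prod_empty, mul_one]
  exfalso
  obtain ⟨i, j, w, hw⟩ := NeWord.of_word P.tail htail
  have hip : i ≠ p := fun hip => P.fstIdx_ne (hw ▸ hip ▸ w.fstIdx_toWord)
  set c := P.head⁻¹ * a * P.head
  have hc : c ≠ 1 := by simpa [c, mul_assoc, inv_mul_eq_one] using ha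
  have hb : b ≠ 1 := by
    rintro rfl
    rw [map_one, mul_inv_eq_one, mul_eq_left] at h
    exact ha (of_injective p (by rw [h, map_one]))
  have hW : ((w.inv.append hip (NeWord.singleton c hc)).append hip.symm w).prod
      = (NeWord.singleton b hb).prod := by
    rw [NeWord.append_prod, NeWord.append_prod, NeWord.inv_prod, NeWord.prod_singleton,
      NeWord.prod_singleton, ← h, ← inv_inv x, hx]
    simp only [NeWord.prod, hw, c, map_mul, map_inv]
    group
  have hlen := NeWord.length_toList_eq_of_prod_eq hW
  simp only [NeWord.toList, List.length_append, List.length_singleton] at hlen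
  have := List.length_pos_of_ne_nil w.toList_ne_nil
  omega

end Monoid.CoprodI

namespace Subgroup
variable {G ι : Type*} [Group G]

theorem mem_of_conj_mem_of_lift_subtype_injective {K : ι → Subgroup G}
    (hinj : Function.Injective (lift fun i => (K i).subtype)) {x : G}
    (hx : x ∈ (lift fun i => (K i).subtype).range) {p : ι} {a : G} (ha : a ∈ K p) (ha1 : a ≠ 1)
    (hxa : x * a * x⁻¹ ∈ K p) : x ∈ K p := by
  obtain ⟨X, rfl⟩ := hx
  have hX : X * of (M := fun i => K i) ⟨a, ha⟩ * X⁻¹ = of (M := fun i => K i) ⟨_, hxa⟩ :=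
    hinj (by simp)
  obtain ⟨c, rfl⟩ := mem_range_of_of_conj_eq_of (by simpa using ha1) hX
  simp

theorem conj_mem_map_subtype {H : Subgroup G} {N : Subgroup H} [N.Normal] {g n : G}
    (hg : g ∈ H) (hn : n ∈ N.map H.subtype) : g * n * g⁻¹ ∈ N.map H.subtype := by
  obtain ⟨n, hn, rfl⟩ := hn
  exact ⟨⟨g, hg⟩ * n * ⟨g, hg⟩⁻¹, ‹N.Normal›.conj_mem n hn _, rfl⟩

end Subgroup

/-- **The Cohen–Lyndon property implies that Dehn filling is injective on the factors.**
Let `G` be a group, `{H i}` a family of subgroups of `G`, and for each `i` let `N i` be a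
nontrivial normal subgroup of `H i`. Let `⟪N⟫` be the normal closure in `G` of the union
of the `N i`. If the triple `(G, {H i}, {N i})` has the Cohen-Lyndon property, then for
every `i` one has `H i ∩ ⟪N⟫ = N i`; equivalently, the natural homomorphism
`H i / N i → G/⟪N⟫` is injective. -/
theorem cohenLyndon_inf_normalClosure {G : Type*} [Group G] {ι : Type*}
    (H : ι → Subgroup G) (N : ∀ i, Subgroup ↥(H i)) [∀ i, (N i).Normal]
    (hnt : ∀ i, N i ≠ ⊥)
    (hCL : CohenLyndonFamily H (fun j => (N j).map (H j).subtype)) (i : ι) :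
    H i ⊓ familyNC (fun j => (N j).map (H j).subtype) = (N i).map (H i).subtype := by
  obtain ⟨T, htrans, hinj, hrange⟩ := hCL
  refine le_antisymm (fun g ⟨hgH, hgN⟩ => ?_)
    (le_inf (Subgroup.map_subtype_le _)
      fun z hz => Subgroup.subset_normalClosure (Set.mem_iUnion.2 ⟨i, hz⟩))
  obtain ⟨t, ⟨ht, -⟩, -⟩ := htrans i 1
  obtain ⟨⟨n, hn⟩, hn1⟩ := (N i).ne_bot_iff_exists_ne_one.1 (hnt i)
  have hconj {x : G} : t * x * t⁻¹ ∈ ((N i).map (H i).subtype).map (MulAut.conj t).toMonoidHom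
      ↔ x ∈ (N i).map (H i).subtype :=
    Subgroup.mem_map_iff_mem (f := (MulAut.conj t).toMonoidHom) (MulAut.conj t).injective
  have hgn : (t * g * t⁻¹) * (t * n * t⁻¹) * (t * g * t⁻¹)⁻¹ = t * (g * n * g⁻¹) * t⁻¹ := by
    group
  have hnN : (n : G) ∈ (N i).map (H i).subtype := ⟨n, hn, rfl⟩
  rw [← hconj]
  refine Subgroup.mem_of_conj_mem_of_lift_subtype_injective (p := ⟨i, t, ht⟩)
    (a := t * n * t⁻¹) hinj ?_ (hconj.2 hnN) ?_ ?_
  · rw [hrange]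
    exact Subgroup.normalClosure_normal.conj_mem g hgN t
  · simpa using hn1
  · rw [hgn]
    exact hconj.2 (Subgroup.conj_mem_map_subtype hgH hnN)
end

section
/- Let A and B be nontrivial groups. Then the normalizer of A in the free product A ∗ B is A itself: N_{A∗B}(A) = A, where A is regarded as a subgroup of A ∗ B via the canonical embedding. -/
/-!
Write `g` in the normalizer of `A` as `g = a₀ k`, where `a₀ ∈ A` and the reduced word of `k`
does not start with a letter from `A`. If `k ≠ 1`, then for any `a ∈ A \ {1}` the word
`k⁻¹ · a · k` is already reduced and has length at least three, so `k⁻¹ a k ∉ A`, contradicting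
`k ∈ N(A)`. Hence `k = 1` and `g ∈ A`.
-/

namespace Monoid.CoprodI

variable {ι : Type*} {G : ι → Type*} [∀ i, Group (G i)]

namespace NeWord

theorem fstIdx_toWord_s8 {i j : ι} (w : NeWord G i j) : w.toWord.fstIdx = some i := by
  simp [Word.fstIdx, toWord]

variable [DecidableEq ι] [∀ i, DecidableEq (G i)]

theorem equiv_prod {i j : ι} (w : NeWord G i j) : Word.equiv w.prod = w.toWord :=
  Word.equiv.apply_symm_apply w.toWord

theorem length_toList_equiv_of_le_one {k : ι} (b : G k) :
    (Word.equiv (of b)).toList.length ≤ 1 := by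
  by_cases hb : b = 1
  · simp [hb, Word.equiv, Word.empty]
  · rw [← prod_singleton b hb, equiv_prod]
    simp [toWord]

theorem prod_notMem_range_of {i j : ι} (w : NeWord G i j) (hw : 2 ≤ w.toList.length) (k : ι) :
    w.prod ∉ (of : G k →* CoprodI G).range := by
  rintro ⟨b, hb⟩
  have := length_toList_equiv_of_le_one b
  rw [hb, equiv_prod] at this
  exact absurd hw (by simpa [toWord] using this)

theorem conj_notMem_range_of {i j k : ι} (u : NeWord G j k) (hj : j ≠ i) {a : G i} (ha : a ≠ 1) :
    u.prod⁻¹ * of a * u.prod ∉ (of : G i →* CoprodI G).range := by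
  have hv : ((u.inv.append hj (singleton a ha)).append hj.symm u).prod
      = u.prod⁻¹ * of a * u.prod := by
    simp only [append_prod, inv_prod, prod_singleton]
  rw [← hv]
  refine prod_notMem_range_of _ ?_ i
  have := List.length_pos_iff.2 u.toList_ne_nil
  simp only [toList, List.length_append, List.length_singleton]
  omega

end NeWord

theorem normalizer_range_of (i : ι) [Nontrivial (G i)] :
    Subgroup.normalizer ((of : G i →* CoprodI G).range : Set (CoprodI G))
      = (of : G i →* CoprodI G).range := by
  classical
  refine le_antisymm (fun g hg => ?_) Subgroup.le_normalizer
  set A := (of : G i →* CoprodI G).range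
  set p := Word.equivPair i (Word.equiv g)
  have hg_eq : g = of p.head * p.tail.prod := by
    rw [← Word.prod_rcons, ← Word.equivPair_symm, Equiv.symm_apply_apply]
    exact (Word.equiv.symm_apply_apply g).symm
  have hhead : of p.head ∈ A := ⟨_, rfl⟩
  have htail : p.tail.prod ∈ Subgroup.normalizer (A : Set (CoprodI G)) := by
    have := mul_mem (inv_mem (Subgroup.le_normalizer hhead)) hg
    rwa [hg_eq, inv_mul_cancel_left] at this
  rw [hg_eq]
  refine mul_mem hhead ?_
  by_cases hempty : p.tail = Word.empty
  · rw [hempty, Word.prod_empty]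
    exact one_mem A
  obtain ⟨j, l, u, hu⟩ := NeWord.of_word p.tail hempty
  have hj : j ≠ i := fun h => p.fstIdx_ne (by rw [← hu, NeWord.fstIdx_toWord_s8, h])
  obtain ⟨a, ha⟩ := exists_ne (1 : G i)
  have hconj := (Subgroup.mem_normalizer_iff''.mp htail (of a)).mp ⟨a, rfl⟩
  rw [← hu] at hconj
  exact (NeWord.conj_notMem_range_of u hj ha hconj).elim

end Monoid.CoprodI

universe u v

instance Bool.instGroupCond (X Y : Type u) [Group X] [Group Y] : ∀ b, Group (cond b X Y)
  | true => ‹Group X›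
  | false => ‹Group Y›

namespace Monoid.Coprod

variable (A : Type u) (B : Type v) [Group A] [Group B]

/-- `Monoid.Coprod` has no theory of reduced words, so we transport to `Monoid.CoprodI`; the
`ULift`s put both factors in one universe. -/
def equivCoprodI : A ∗ B ≃* CoprodI (fun b => cond b (ULift.{v} A) (ULift.{u} B)) :=
  MonoidHom.toMulEquiv
    (lift ((CoprodI.of (i := true)).comp MulEquiv.ulift.symm.toMonoidHom)
      ((CoprodI.of (i := false)).comp MulEquiv.ulift.symm.toMonoidHom))
    (CoprodI.lift fun
      | true => inl.comp MulEquiv.ulift.toMonoidHom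
      | false => inr.comp MulEquiv.ulift.toMonoidHom)
    (hom_ext rfl rfl)
    (CoprodI.ext_hom _ _ fun | true => rfl | false => rfl)

theorem comap_equivCoprodI_range_of :
    (CoprodI.of (i := true)).range.comap (equivCoprodI A B).toMonoidHom
      = (inl : A →* A ∗ B).range := by
  ext x
  constructor
  · rintro ⟨a, ha⟩
    exact ⟨a.down, (equivCoprodI A B).injective (Eq.trans rfl ha)⟩
  · rintro ⟨a, rfl⟩
    exact ⟨ULift.up a, rfl⟩

end Monoid.Coprod

theorem normalizer_inl_range_coprod_general {A B : Type*} [Group A] [Group B]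
    [Nontrivial A] :
    Subgroup.normalizer ((MonoidHom.range (Monoid.Coprod.inl : A →* Monoid.Coprod A B)) : Set (Monoid.Coprod A B))
      = MonoidHom.range (Monoid.Coprod.inl : A →* Monoid.Coprod A B) := by
  have : Nontrivial (cond true (ULift.{u_2} A) (ULift.{u_1} B)) := inferInstanceAs (Nontrivial (ULift A))
  rw [← Monoid.Coprod.comap_equivCoprodI_range_of, ← Subgroup.comap_normalizer_eq_of_surjective _
    (f := (Monoid.Coprod.equivCoprodI A B).toMonoidHom) (Monoid.Coprod.equivCoprodI A B).surjective,
    Monoid.CoprodI.normalizer_range_of]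

/-- **The normalizer of a factor of a free product.**
Let `A` and `B` be nontrivial groups. Then the normalizer of `A` in the free product
`A ∗ B` is `A` itself, where `A` is regarded as a subgroup of `A ∗ B` via the canonical
embedding. -/
theorem normalizer_inl_range_coprod {A B : Type*} [Group A] [Group B]
    [Nontrivial A] [Nontrivial B] :
    Subgroup.normalizer ((MonoidHom.range (Monoid.Coprod.inl : A →* Monoid.Coprod A B)) : Set (Monoid.Coprod A B))
      = MonoidHom.range (Monoid.Coprod.inl : A →* Monoid.Coprod A B) :=
  normalizer_inl_range_coprod_general
end

section
/- Let G be a group, {H_λ}_{λ∈Λ} a family of subgroups, and for each λ let N_λ be a normal subgroup of H_λ. Let N = ⋃_λ N_λ and ⟪N⟫ its normal closure in G, and suppose the triple (G, {H_λ}, {N_λ}) has the Cohen-Lyndon property, with left transversals T_λ of H_λ⟪N⟫ in G witnessing it. Fix λ ∈ Λ. For each t ∈ T_λ, let Ā_t denote the image of the conjugate tN_λt⁻¹ under the quotient map ⟪N⟫ → ⟪N⟫/[⟪N⟫,⟪N⟫]. Then for every g ∈ G and every t₀ ∈ T_λ, letting t₁ be the unique element of T_λ with g t₀ ∈ t₁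 H_λ⟪N⟫, the automorphism of the abelianization ⟪N⟫/[⟪N⟫,⟪N⟫] induced by conjugation by g maps Ā_{t₀} onto Ā_{t₁}. In particular, the conjugation action of G transitively permutes the family {Ā_t : t ∈ T_λ}. -/
/-- `Ā t`: the image of the conjugate `t (N lam) t⁻¹` under the quotient map from
`⟪N⟫` to its abelianization `⟪N⟫/[⟪N⟫,⟪N⟫]`. -/
def Abar {G : Type*} [Group G] {ι : Type*} (H : ι → Subgroup G)
    (N : ∀ i, Subgroup ↥(H i)) (lam : ι) (t : G) :
    Subgroup (Abelianization ↥(familyNC fun j => (N j).map (H j).subtype)) :=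
  Subgroup.map Abelianization.of
    ((((N lam).map (H lam).subtype).map (MulAut.conj t).toMonoidHom).subgroupOf
      (familyNC fun j => (N j).map (H j).subtype))


/-!
Since `⟪N⟫` is normal, `t₁⁻¹ g t₀ ∈ H_λ ⟪N⟫` lets us write `g t₀ = k t₁ h` with `k ∈ ⟪N⟫` and
`h ∈ H_λ`. Conjugation by `h` fixes `N_λ`, so `g t₀ N_λ (g t₀)⁻¹ = k (t₁ N_λ t₁⁻¹) k⁻¹`; and
conjugation by `k ∈ ⟪N⟫` is an inner automorphism of `⟪N⟫`, hence trivial on its abelianization.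
-/

open Subgroup

section

variable {G : Type*} [Group G]

theorem Subgroup.map_conj_mul (A : Subgroup G) (a b : G) :
    A.map (MulAut.conj (a * b)).toMonoidHom =
      (A.map (MulAut.conj b).toMonoidHom).map (MulAut.conj a).toMonoidHom := by
  rw [map_map, map_mul]
  rfl

theorem Subgroup.map_subtype_map_conj_of_mem {H : Subgroup G} (N : Subgroup H) [N.Normal]
    {h : G} (hh : h ∈ H) :
    (N.map H.subtype).map (MulAut.conj h).toMonoidHom = N.map H.subtype :=
  mem_normalizer_iff_map_conj_eq.mp <|
    le_normalizer_map H.subtype ⟨⟨h, hh⟩, normalizer_eq_top (H := N) ▸ mem_top _, rfl⟩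

theorem Subgroup.exists_eq_mul_mul_of_inv_mul_mem_sup {H K : Subgroup G} [K.Normal] {x y : G}
    (hxy : y⁻¹ * x ∈ H ⊔ K) : ∃ k ∈ K, ∃ h ∈ H, x = k * y * h := by
  obtain ⟨h, hh, n, hn, hhn⟩ := mem_sup_of_normal_right.mp hxy
  refine ⟨y * (h * n * h⁻¹) * y⁻¹, ‹K.Normal›.conj_mem _ (‹K.Normal›.conj_mem n hn h) y, h, hh, ?_⟩
  rw [eq_inv_mul_iff_mul_eq.mpr hhn]
  group

theorem Subgroup.map_conjNormal_subgroupOf (K : Subgroup G) [K.Normal] (A : Subgroup G) (g : G) :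
    (A.subgroupOf K).map (MulAut.conjNormal g : MulAut K).toMonoidHom =
      (A.map (MulAut.conj g).toMonoidHom).subgroupOf K := by
  ext x
  simp [map_equiv_eq_comap_symm, mem_subgroupOf, MulAut.conjNormal_symm_apply]

theorem Abelianization.map_conj (x : G) :
    Abelianization.map (MulAut.conj x).toMonoidHom = MonoidHom.id (Abelianization G) := by
  ext y
  simp [map_of, mul_comm (of x)]

theorem Abelianization.map_conjNormal_map_of_subgroupOf (K : Subgroup G) [K.Normal]
    (A : Subgroup G) (g : G) :
    ((A.subgroupOf K).map of).map (map (MulAut.conjNormal g : MulAut K).toMonoidHom) =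
      ((A.map (MulAut.conj g).toMonoidHom).subgroupOf K).map of := by
  rw [Subgroup.map_map, ← map_conjNormal_subgroupOf, Subgroup.map_map]
  rfl

theorem Abelianization.map_of_subgroupOf_map_conj_of_mem (K : Subgroup G) [K.Normal]
    (A : Subgroup G) {k : G} (hk : k ∈ K) :
    ((A.map (MulAut.conj k).toMonoidHom).subgroupOf K).map of = (A.subgroupOf K).map of := by
  have hconj : MulAut.conjNormal k = MulAut.conj (⟨k, hk⟩ : K) :=
    MulAut.conjNormal_val (h := (⟨k, hk⟩ : K))
  rw [← map_conjNormal_map_of_subgroupOf, hconj, map_conj, Subgroup.map_id]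

end

theorem map_conjNormal_Abar {G : Type*} [Group G] {ι : Type*} (H : ι → Subgroup G)
    (N : ∀ i, Subgroup ↥(H i)) [∀ i, (N i).Normal] (lam : ι) {g t₀ t₁ : G}
    (hcoset : t₁⁻¹ * (g * t₀) ∈ H lam ⊔ familyNC (fun j => (N j).map (H j).subtype)) :
    (Abar H N lam t₀).map (Abelianization.map (MulAut.conjNormal g).toMonoidHom) =
      Abar H N lam t₁ := by
  obtain ⟨k, hk, h, hh, hgt⟩ := exists_eq_mul_mul_of_inv_mul_mem_sup hcoset
  calc _ = ((((N lam).map (H lam).subtype).map (MulAut.conj (g * t₀)).toMonoidHom).subgroupOf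
          (familyNC fun j => (N j).map (H j).subtype)).map Abelianization.of := by
        rw [Abar, Abelianization.map_conjNormal_map_of_subgroupOf, map_conj_mul]
    _ = Abar H N lam t₁ := by
        rw [hgt, map_conj_mul, map_subtype_map_conj_of_mem _ hh, map_conj_mul,
          Abelianization.map_of_subgroupOf_map_conj_of_mem _ _ hk, Abar]

theorem conj_maps_Abar_onto_Abar_general {G : Type*} [Group G] {ι : Type*}
    (H : ι → Subgroup G) (N : ∀ i, Subgroup ↥(H i)) [∀ i, (N i).Normal]
    (T : ι → Set G)
    (lam : ι) (g : G) (t₀ t₁ : G)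
    (hcoset : t₁⁻¹ * (g * t₀) ∈ H lam ⊔ familyNC (fun j => (N j).map (H j).subtype)) :
    Subgroup.map (Abelianization.map (MulAut.conjNormal g).toMonoidHom)
        (Abar H N lam t₀) = Abar H N lam t₁ ∧
      ∀ s ∈ T lam, ∀ s' ∈ T lam, ∃ g' : G,
        Subgroup.map (Abelianization.map (MulAut.conjNormal g').toMonoidHom)
          (Abar H N lam s) = Abar H N lam s' := by
  refine ⟨map_conjNormal_Abar H N lam hcoset, fun s _ s' _ => ⟨s' * s⁻¹, ?_⟩⟩
  refine map_conjNormal_Abar H N lam ?_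
  rw [show s'⁻¹ * (s' * s⁻¹ * s) = 1 by group]
  exact one_mem _

/-- **Conjugation permutes the summands of the abelianized Dehn filling kernel.**
Let `(G, {H i}, {N i})` (with `N i` a normal subgroup of `H i`) have the Cohen-Lyndon
property, witnessed by left transversals `T i` of `H i ⟪N⟫` in `G`. Fix `lam`, let
`g ∈ G`, let `t₀ ∈ T lam` and let `t₁` be the element of `T lam` with
`g t₀ ∈ t₁ · H lam ⟪N⟫`. Then the automorphism of the abelianization `⟪N⟫/[⟪N⟫,⟪N⟫]`
induced by conjugation by `g` maps `Ā t₀` onto `Ā t₁`; in particular the conjugation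
action of `G` transitively permutes the family `{Ā t : t ∈ T lam}`. -/
theorem conj_maps_Abar_onto_Abar {G : Type*} [Group G] {ι : Type*}
    (H : ι → Subgroup G) (N : ∀ i, Subgroup ↥(H i)) [∀ i, (N i).Normal]
    (T : ι → Set G)
    (hCL : CohenLyndonFamilyWith H (fun j => (N j).map (H j).subtype) T)
    (lam : ι) (g : G) (t₀ t₁ : G) (ht₀ : t₀ ∈ T lam) (ht₁ : t₁ ∈ T lam)
    (hcoset : t₁⁻¹ * (g * t₀) ∈ H lam ⊔ familyNC (fun j => (N j).map (H j).subtype)) :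
    Subgroup.map (Abelianization.map (MulAut.conjNormal g).toMonoidHom)
        (Abar H N lam t₀) = Abar H N lam t₁ ∧
      ∀ s ∈ T lam, ∀ s' ∈ T lam, ∃ g' : G,
        Subgroup.map (Abelianization.map (MulAut.conjNormal g').toMonoidHom)
          (Abar H N lam s) = Abar H N lam s' :=
  conj_maps_Abar_onto_Abar_general H N T lam g t₀ t₁ hcoset
end

section
/- Let {G_i}_{i∈I} be a family of groups and let G = ∗_{i∈I} G_i be their free product (coproduct), with each G_i regarded as a subgroup of G via the canonical embedding. Let N_i be a normal subgroup of G_i for each i ∈ I. Then the triple (G, {G_i}_{i∈I}, {N_i}_{i∈I}) has the Cohen-Lyndon property. -/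
/-!
We prove the statement for the kernel of `map π : ∗ G i → ∗ Q i` for any family of surjections
`π i : G i → Q i`; the theorem is the case `Q i = G i ⧸ N i`.

Lifting the reduced words of `∗ Q i` letter by letter gives a set-theoretic section `ℓ` of
`map π`. Since `map π` identifies the left cosets of `(of (G i)).range ⊔ ker (map π)` with those
of `(of (Q i)).range`, the elements `ℓ(q)⁻¹`, `q` a reduced word not beginning in `Q i`, form a
transversal `T i`. The Schreier identity `of x * ℓ(q) = ℓ(π x * q) * t n t⁻¹`, where `n` lies in
`ker (π k)` and `t = ℓ(q')⁻¹` for the tail `q'` of `q` at `k`, shows by induction on words that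
the conjugates `t (ker π i) t⁻¹`, `t ∈ T i`, generate `ker (map π)`. Read as a cocycle, the same
identity lets `∗ G i` act on `(∗ Q i) × F`, `F` the abstract free product of these conjugates,
so that the image of `u ∈ F` sends `(1, w)` to `(1, u * w)`; hence `F → ∗ G i` is injective.
-/

open Function

open Classical in
noncomputable def MonoidHom.surjInvOne {A B : Type*} [MulOneClass A] [MulOneClass B] {f : A →* B}
    (hf : Surjective f) (b : B) : A :=
  if b = 1 then 1 else surjInv hf b

@[simp]
theorem MonoidHom.apply_surjInvOne {A B : Type*} [MulOneClass A] [MulOneClass B] {f : A →* B}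
    (hf : Surjective f) (b : B) : f (surjInvOne hf b) = b := by
  unfold surjInvOne
  split_ifs with h
  · rw [h, map_one]
  · exact surjInv_eq hf b

@[simp]
theorem MonoidHom.surjInvOne_one {A B : Type*} [MulOneClass A] [MulOneClass B] {f : A →* B}
    (hf : Surjective f) : surjInvOne hf 1 = 1 :=
  if_pos rfl

namespace Monoid.CoprodI

section NormalForm

variable {ι : Type*} {M : ι → Type*} [∀ i, Monoid (M i)] [DecidableEq ι] [∀ i, DecidableEq (M i)]

theorem Word.equiv_one : Word.equiv (1 : CoprodI M) = Word.empty :=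
  one_smul (CoprodI M) (Word.empty : Word M)

theorem Word.equiv_mul (a b : CoprodI M) : Word.equiv (a * b) = a • Word.equiv b :=
  mul_smul a b _

theorem Word.equiv_prod (w : Word M) : Word.equiv w.prod = w :=
  Word.equiv.apply_symm_apply w

theorem Word.prod_equiv (m : CoprodI M) : (Word.equiv m).prod = m :=
  Word.equiv.symm_apply_apply m

def fstIdx (m : CoprodI M) : Option ι :=
  (Word.equiv m).fstIdx

def headAt (i : ι) (m : CoprodI M) : M i :=
  (Word.equivPair i (Word.equiv m)).head

def tailAt (i : ι) (m : CoprodI M) : CoprodI M :=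
  (Word.equivPair i (Word.equiv m)).tail.prod

theorem of_headAt_mul_tailAt (i : ι) (m : CoprodI M) : of (headAt i m) * tailAt i m = m := by
  rw [headAt, tailAt, ← Word.prod_rcons, ← Word.equivPair_symm, Equiv.symm_apply_apply,
    Word.prod_equiv]

theorem fstIdx_tailAt_ne (i : ι) (m : CoprodI M) : fstIdx (tailAt i m) ≠ some i := by
  rw [fstIdx, tailAt, Word.equiv_prod]
  exact (Word.equivPair i _).fstIdx_ne

theorem headAt_of_mul {i : ι} (x : M i) (m : CoprodI M) : headAt i (of x * m) = x * headAt i m := by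
  rw [headAt, Word.equiv_mul, Word.equivPair_smul_same]
  rfl

theorem tailAt_of_mul {i : ι} (x : M i) (m : CoprodI M) : tailAt i (of x * m) = tailAt i m := by
  rw [tailAt, Word.equiv_mul, Word.equivPair_smul_same]
  rfl

theorem headAt_of_fstIdx_ne {i : ι} {m : CoprodI M} (h : fstIdx m ≠ some i) : headAt i m = 1 := by
  rw [headAt, Word.equivPair_eq_of_fstIdx_ne h]

theorem tailAt_of_fstIdx_ne {i : ι} {m : CoprodI M} (h : fstIdx m ≠ some i) : tailAt i m = m := by
  rw [tailAt, Word.equivPair_eq_of_fstIdx_ne h, Word.prod_equiv]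

@[elab_as_elim]
theorem induction_fstIdx {motive : CoprodI M → Prop} (m : CoprodI M) (one : motive 1)
    (of_mul : ∀ (i : ι) (x : M i) (m : CoprodI M), x ≠ 1 → fstIdx m ≠ some i → motive m →
      motive (of x * m)) :
    motive m := by
  rw [← Word.prod_equiv m]
  induction Word.equiv m using Word.consRecOn with
  | empty => exact one
  | cons i x w hw hx ih =>
    rw [Word.prod_cons]
    exact of_mul i x _ hx (by rwa [fstIdx, Word.equiv_prod]) ih

theorem existsUnique_fstIdx_ne_mul_mem_range_of {G : ι → Type*} [∀ i, Group (G i)]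
    [∀ i, DecidableEq (G i)] (i : ι) (g : CoprodI G) :
    ∃! r : CoprodI G, fstIdx r ≠ some i ∧ r * g ∈ (of : G i →* CoprodI G).range := by
  refine ⟨tailAt i g⁻¹, ⟨fstIdx_tailAt_ne i g⁻¹, (headAt i g⁻¹)⁻¹, ?_⟩, ?_⟩
  · rw [map_inv, inv_eq_iff_eq_inv, mul_inv_rev, eq_mul_inv_iff_mul_eq, of_headAt_mul_tailAt]
  · rintro r ⟨hr, y, hy⟩
    rw [← tailAt_of_fstIdx_ne hr, eq_mul_inv_of_mul_eq hy.symm, tailAt_of_mul]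

variable {H : Type*} [Monoid H]

def liftLetters (s : ∀ i, M i → H) (m : CoprodI M) : H :=
  ((Word.equiv m).toList.map fun l => s l.1 l.2).prod

theorem liftLetters_one (s : ∀ i, M i → H) : liftLetters s 1 = 1 := by
  rw [liftLetters, Word.equiv_one]
  rfl

theorem liftLetters_of_mul {s : ∀ i, M i → H} (hs : ∀ i, s i 1 = 1) {i : ι} (x : M i)
    {m : CoprodI M} (hm : fstIdx m ≠ some i) :
    liftLetters s (of x * m) = s i x * liftLetters s m := by
  by_cases hx : x = 1
  · rw [hx, map_one, one_mul, hs, one_mul]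
  · rw [liftLetters, Word.equiv_mul, ← Word.cons_eq_smul (h1 := hm) (h2 := hx)]
    rfl

theorem liftLetters_eq_headAt_mul_tailAt {s : ∀ i, M i → H} (hs : ∀ i, s i 1 = 1) (i : ι)
    (m : CoprodI M) : liftLetters s m = s i (headAt i m) * liftLetters s (tailAt i m) := by
  conv_lhs => rw [← of_headAt_mul_tailAt i m]
  exact liftLetters_of_mul hs _ (fstIdx_tailAt_ne i m)

theorem map_liftLetters {s : ∀ i, M i → H} (f : H →* CoprodI M) (hf : ∀ i x, f (s i x) = of x)
    (m : CoprodI M) : f (liftLetters s m) = m := by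
  rw [liftLetters, map_list_prod, List.map_map]
  simp only [Function.comp_def, hf]
  exact Word.prod_equiv m

end NormalForm

section Kernel

open MonoidHom

variable {ι : Type*} {G Q : ι → Type*} [∀ i, Group (G i)] [∀ i, Group (Q i)]

def map (π : ∀ i, G i →* Q i) : CoprodI G →* CoprodI Q :=
  lift fun i => of.comp (π i)

@[simp]
theorem map_of (π : ∀ i, G i →* Q i) {i : ι} (x : G i) : map π (of x) = of (π i x) :=
  lift_of _ x

theorem map_range_of {π : ∀ i, G i →* Q i} (hπ : ∀ i, Surjective (π i)) (i : ι) :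
    (of : G i →* CoprodI G).range.map (map π) = (of : Q i →* CoprodI Q).range := by
  rw [MonoidHom.map_range, map, lift_comp_of, MonoidHom.range_comp,
    (π i).range_eq_top_of_surjective (hπ i), ← MonoidHom.range_eq_map]

theorem familyNC_le_ker_map {π : ∀ i, G i →* Q i} :
    (familyNC fun i => (π i).ker.map of) ≤ (map π).ker :=
  Subgroup.normalClosure_le_normal <| Set.iUnion_subset fun i => by
    rintro _ ⟨n, hn, rfl⟩
    rw [SetLike.mem_coe, mem_ker, map_of, mem_ker.mp hn, map_one]

variable [DecidableEq ι] [∀ i, DecidableEq (Q i)] {π : ∀ i, G i →* Q i}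
  (hπ : ∀ i, Surjective (π i))

noncomputable def letterLift (q : CoprodI Q) : CoprodI G :=
  liftLetters (fun i y => of (surjInvOne (hπ i) y)) q

@[simp]
theorem map_letterLift (q : CoprodI Q) : map π (letterLift hπ q) = q :=
  map_liftLetters _ (fun i y => by rw [map_of, apply_surjInvOne]) q

@[simp]
theorem letterLift_one : letterLift hπ 1 = 1 :=
  liftLetters_one _

theorem letterLift_of_mul {i : ι} (y : Q i) {q : CoprodI Q} (hq : fstIdx q ≠ some i) :
    letterLift hπ (of y * q) = of (surjInvOne (hπ i) y) * letterLift hπ q :=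
  liftLetters_of_mul (fun i => by rw [surjInvOne_one, map_one]) y hq

theorem letterLift_eq_headAt_mul_tailAt (i : ι) (q : CoprodI Q) :
    letterLift hπ q = of (surjInvOne (hπ i) (headAt i q)) * letterLift hπ (tailAt i q) :=
  liftLetters_eq_headAt_mul_tailAt (fun i => by rw [surjInvOne_one, map_one]) i q

noncomputable def schreierLetter {k : ι} (x : G k) (q : CoprodI Q) : (π k).ker :=
  ⟨(surjInvOne (hπ k) (π k x * headAt k q))⁻¹ * x * surjInvOne (hπ k) (headAt k q), by
    simp [mul_assoc]⟩

theorem schreierLetter_mul {k : ι} (x x' : G k) (q : CoprodI Q) :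
    schreierLetter hπ (x * x') q =
      schreierLetter hπ x (of (π k x') * q) * schreierLetter hπ x' q := by
  ext
  simp [schreierLetter, headAt_of_mul, mul_assoc]

theorem schreierLetter_one {k : ι} (q : CoprodI Q) : schreierLetter hπ (1 : G k) q = 1 := by
  ext
  simp [schreierLetter]

theorem schreierLetter_surjInvOne {k : ι} (y : Q k) {q : CoprodI Q} (hq : fstIdx q ≠ some k) :
    schreierLetter hπ (surjInvOne (hπ k) y) q = 1 := by
  ext
  simp [schreierLetter, headAt_of_fstIdx_ne hq]

theorem schreierLetter_of_mem_ker {k : ι} (n : (π k).ker) {q : CoprodI Q}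
    (hq : fstIdx q ≠ some k) : schreierLetter hπ (n : G k) q = n := by
  ext
  simp [schreierLetter, headAt_of_fstIdx_ne hq, mem_ker.mp n.2]

def transversal (i : ι) : Set (CoprodI G) :=
  {t | ∃ q : CoprodI Q, fstIdx q ≠ some i ∧ (letterLift hπ q)⁻¹ = t}

def conjFactor (p : Σ i, transversal hπ i) : Subgroup (CoprodI G) :=
  ((π p.1).ker.map of).map (MulAut.conj (p.2 : CoprodI G)).toMonoidHom

abbrev ConjCoprod : Type _ :=
  CoprodI fun p : Σ i, transversal hπ i => conjFactor hπ p

noncomputable def conjCoprodLift : ConjCoprod hπ →* CoprodI G :=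
  lift fun p => (conjFactor hπ p).subtype

noncomputable def conjGen (p : Σ i, transversal hπ i) : (π p.1).ker →* ConjCoprod hπ :=
  (of (M := fun p => conjFactor hπ p) (i := p)).comp <|
    ((MulAut.conj (p.2 : CoprodI G)).toMonoidHom.comp (of.comp (π p.1).ker.subtype)).codRestrict
      (conjFactor hπ p) fun n => Subgroup.mem_map_of_mem _ (Subgroup.mem_map_of_mem _ n.2)

@[simp]
theorem conjCoprodLift_conjGen (p : Σ i, transversal hπ i) (n : (π p.1).ker) :
    conjCoprodLift hπ (conjGen hπ p n) = p.2 * of (n : G p.1) * (p.2 : CoprodI G)⁻¹ := by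
  simp [conjCoprodLift, conjGen, MulAut.conj_apply]

theorem exists_conjGen_eq_of {p : Σ i, transversal hπ i} (c : conjFactor hπ p) :
    ∃ n, conjGen hπ p n = (of c : ConjCoprod hπ) := by
  obtain ⟨_, ⟨_, ⟨n, hn, rfl⟩, hc⟩⟩ := c
  exact ⟨⟨n, hn⟩, congrArg of (Subtype.ext hc)⟩

noncomputable def tailGen (k : ι) (q : CoprodI Q) : (π k).ker →* ConjCoprod hπ :=
  conjGen hπ ⟨k, (letterLift hπ (tailAt k q))⁻¹, tailAt k q, fstIdx_tailAt_ne k q, rfl⟩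

theorem conjGen_congr {k : ι} {t t' : CoprodI G} {ht : t ∈ transversal hπ k}
    {ht' : t' ∈ transversal hπ k} (h : t = t') :
    conjGen hπ ⟨k, t, ht⟩ = conjGen hπ ⟨k, t', ht'⟩ := by
  subst h
  rfl

theorem tailGen_of_mul {k : ι} (y : Q k) (q : CoprodI Q) :
    tailGen hπ k (of y * q) = tailGen hπ k q :=
  conjGen_congr hπ (by rw [tailAt_of_mul])

theorem tailGen_of_fstIdx_ne {k : ι} {q : CoprodI Q} (hq : fstIdx q ≠ some k) :
    tailGen hπ k q = conjGen hπ ⟨k, (letterLift hπ q)⁻¹, q, hq, rfl⟩ :=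
  conjGen_congr hπ (by rw [tailAt_of_fstIdx_ne hq])

theorem of_mul_letterLift {k : ι} (x : G k) (q : CoprodI Q) :
    of x * letterLift hπ q =
      letterLift hπ (of (π k x) * q) *
        conjCoprodLift hπ (tailGen hπ k q (schreierLetter hπ x q)) := by
  rw [tailGen, conjCoprodLift_conjGen, inv_inv,
    letterLift_eq_headAt_mul_tailAt hπ k (of (π k x) * q), headAt_of_mul, tailAt_of_mul,
    letterLift_eq_headAt_mul_tailAt hπ k q]
  simp [schreierLetter, mul_assoc]

noncomputable def actLetter {k : ι} (x : G k) (a : CoprodI Q × ConjCoprod hπ) :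
    CoprodI Q × ConjCoprod hπ :=
  (of (π k x) * a.1, tailGen hπ k a.1 (schreierLetter hπ x a.1) * a.2)

theorem actLetter_one {k : ι} (a : CoprodI Q × ConjCoprod hπ) : actLetter hπ (1 : G k) a = a := by
  simp [actLetter, schreierLetter_one]

theorem actLetter_mul {k : ι} (x x' : G k) (a : CoprodI Q × ConjCoprod hπ) :
    actLetter hπ (x * x') a = actLetter hπ x (actLetter hπ x' a) := by
  simp [actLetter, schreierLetter_mul, tailGen_of_mul, mul_assoc]

noncomputable def factorAct (k : ι) : G k →* Function.End (CoprodI Q × ConjCoprod hπ) where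
  toFun := actLetter hπ
  map_one' := funext (actLetter_one hπ)
  map_mul' x x' := funext (actLetter_mul hπ x x')

noncomputable def schreierAction : CoprodI G →* Equiv.Perm (CoprodI Q × ConjCoprod hπ) :=
  lift fun k => (factorAct hπ k).toHomPerm

theorem schreierAction_of {k : ι} (x : G k) (a : CoprodI Q × ConjCoprod hπ) :
    schreierAction hπ (of x) a = actLetter hπ x a := by
  rw [schreierAction, lift_of]
  rfl

theorem schreierAction_letterLift (q : CoprodI Q) (w : ConjCoprod hπ) :
    schreierAction hπ (letterLift hπ q) (1, w) = (q, w) := by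
  induction q using induction_fstIdx with
  | one => simp
  | of_mul i y q _ hq ih =>
    rw [letterLift_of_mul hπ y hq, map_mul, Equiv.Perm.mul_apply, ih, schreierAction_of]
    simp [actLetter, schreierLetter_surjInvOne hπ y hq]

theorem schreierAction_conjGen (p : Σ i, transversal hπ i) (n : (π p.1).ker)
    (w : ConjCoprod hπ) :
    schreierAction hπ (conjCoprodLift hπ (conjGen hπ p n)) (1, w) = (1, conjGen hπ p n * w) := by
  obtain ⟨k, _, q, hq, rfl⟩ := p
  rw [conjCoprodLift_conjGen, inv_inv, mul_assoc, map_mul, map_mul, Equiv.Perm.mul_apply,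
    Equiv.Perm.mul_apply, schreierAction_letterLift, schreierAction_of, actLetter,
    mem_ker.mp n.2, map_one, one_mul, schreierLetter_of_mem_ker hπ n hq,
    ← tailGen_of_fstIdx_ne hπ hq, map_inv, Equiv.Perm.inv_eq_iff_eq, schreierAction_letterLift]

theorem schreierAction_conjCoprodLift (u w : ConjCoprod hπ) :
    schreierAction hπ (conjCoprodLift hπ u) (1, w) = (1, u * w) := by
  induction u using CoprodI.induction_left generalizing w with
  | one => simp
  | mul c u ih =>
    obtain ⟨n, hn⟩ := exists_conjGen_eq_of hπ c
    rw [map_mul, map_mul, Equiv.Perm.mul_apply, ih, ← hn, schreierAction_conjGen, mul_assoc]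

theorem conjCoprodLift_injective : Injective (conjCoprodLift hπ) := fun u v huv => by
  have h := schreierAction_conjCoprodLift hπ u 1
  rw [huv, schreierAction_conjCoprodLift] at h
  simpa using (congrArg Prod.snd h).symm

theorem conjCoprodLift_range_le :
    (conjCoprodLift hπ).range ≤ familyNC fun i => (π i).ker.map of := by
  refine lift_range_le _ _ fun p => ?_
  rw [Subgroup.range_subtype]
  rintro _ ⟨n, hn, rfl⟩
  exact Subgroup.Normal.conj_mem inferInstance n
    (Subgroup.subset_normalClosure (Set.mem_iUnion_of_mem p.1 hn)) p.2

theorem letterLift_map_inv_mul_mem_range (g : CoprodI G) :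
    (letterLift hπ (map π g))⁻¹ * g ∈ (conjCoprodLift hπ).range := by
  induction g using CoprodI.induction_left with
  | one => simp
  | mul x g ih =>
    rw [map_mul, map_of, ← mul_inv_eq_iff_eq_mul.mpr (of_mul_letterLift hπ x (map π g)).symm]
    simpa [mul_assoc] using mul_mem (MonoidHom.mem_range.mpr ⟨_, rfl⟩) ih

theorem ker_map_eq_range_conjCoprodLift : (map π).ker = (conjCoprodLift hπ).range := by
  refine le_antisymm (fun g hg => ?_) ((conjCoprodLift_range_le hπ).trans familyNC_le_ker_map)
  simpa [mem_ker.mp hg] using letterLift_map_inv_mul_mem_range hπ g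

theorem range_conjCoprodLift :
    (conjCoprodLift hπ).range = familyNC fun i => (π i).ker.map of :=
  le_antisymm (conjCoprodLift_range_le hπ)
    (familyNC_le_ker_map.trans (ker_map_eq_range_conjCoprodLift hπ).le)

theorem isLeftTransversal_transversal (i : ι) :
    IsLeftTransversal ((of : G i →* CoprodI G).range ⊔ familyNC fun i => (π i).ker.map of)
      (transversal hπ i) := by
  rw [← range_conjCoprodLift hπ, ← ker_map_eq_range_conjCoprodLift hπ, ← Subgroup.comap_map_eq,
    map_range_of hπ]
  intro g
  obtain ⟨r, ⟨hr, hrg⟩, hunique⟩ := existsUnique_fstIdx_ne_mul_mem_range_of i (map π g)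
  refine ⟨(letterLift hπ r)⁻¹, ⟨⟨r, hr, rfl⟩, by simpa using hrg⟩, ?_⟩
  rintro _ ⟨⟨r', hr', rfl⟩, hr'g⟩
  rw [hunique r' ⟨hr', by simpa using hr'g⟩]

end Kernel

theorem cohenLyndonFamily_of_surjective {ι : Type*} {G Q : ι → Type*} [∀ i, Group (G i)]
    [∀ i, Group (Q i)] {π : ∀ i, G i →* Q i} (hπ : ∀ i, Surjective (π i)) :
    CohenLyndonFamily (fun i => (of : G i →* CoprodI G).range) fun i => (π i).ker.map of := by
  classical
  exact ⟨transversal hπ, isLeftTransversal_transversal hπ, conjCoprodLift_injective hπ,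
    range_conjCoprodLift hπ⟩

end Monoid.CoprodI

/-- **Cohen–Lyndon property for free products.**
Let `{Gi i}` be a family of groups and let `G = ∗ i, Gi i` be their free product, each
`Gi i` being regarded as a subgroup of `G` via the canonical embedding. If `N i` is a
normal subgroup of `Gi i` for each `i`, then the triple `(G, {Gi i}, {N i})` has the
Cohen-Lyndon property. -/
theorem coprodI_cohenLyndon {ι : Type*} {Gi : ι → Type*} [∀ i, Group (Gi i)]
    (N : ∀ i, Subgroup (Gi i)) [∀ i, (N i).Normal] :
    CohenLyndonFamily
      (fun i => MonoidHom.range (Monoid.CoprodI.of : Gi i →* Monoid.CoprodI Gi))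
      (fun i => (N i).map (Monoid.CoprodI.of : Gi i →* Monoid.CoprodI Gi)) := by
  simpa only [QuotientGroup.ker_mk'] using
    Monoid.CoprodI.cohenLyndonFamily_of_surjective fun i => QuotientGroup.mk'_surjective (N i)
end
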